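/- arXiv:2501.13615 — 5 statements merged into one kernel-verified Lean document; each statement's English description precedes it below -/
import Mathlib

section
/- Let Σ be a field of subsets of a nonempty set X and let ν : Σ → [0,∞] be a submeasure. Then the pseudometric space (Σ, d_ν) is complete if and only if the following holds: for every increasing sequence (A_n)_{n∈ℕ} in Σ with Σ_{n} ν(A_{n+1} \ A_n) < ∞, there exists A ∈ Σ such that ν(A_n \ A) = 0 for all n ∈ ℕ and lim_{n→∞} ν(A \ A_n) = 0. -/
open Filter Topology
open scoped ENNReal symmDiff

/-- For a field of subsets `S` of a nonempty set `X` and a submeasure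
`ν : S → [0,∞]`, the pseudometric space `(S, d_ν)` (with `d_ν(A,B) = min{1, ν(A △ B)}`)
is complete iff for every increasing sequence `(Aₙ)` in `S` with `∑ ν(A_{n+1} \ Aₙ) < ∞`
there is `A ∈ S` with `ν(Aₙ \ A) = 0` for all `n` and `ν(A \ Aₙ) → 0`. -/
theorem completeness_characterization
    {X : Type*} [Nonempty X] (S : Set (Set X))
    (hSne : S.Nonempty)
    (hSunion : ∀ A ∈ S, ∀ B ∈ S, A ∪ B ∈ S)
    (hScompl : ∀ A ∈ S, Aᶜ ∈ S)
    (ν : Set X → ℝ≥0∞)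
    (hν0 : ν ∅ = 0)
    (hνmono : ∀ A ∈ S, ∀ B ∈ S, A ⊆ B → ν A ≤ ν B)
    (hνsub : ∀ A ∈ S, ∀ B ∈ S, ν (A ∪ B) ≤ ν A + ν B) :
    -- completeness of (S, d_ν)
    (∀ A : ℕ → Set X, (∀ n, A n ∈ S) →
      (∀ ε : ℝ≥0∞, 0 < ε → ∃ N : ℕ, ∀ m ≥ N, ∀ n ≥ N,
        min 1 (ν (symmDiff (A m) (A n))) < ε) →
      ∃ L ∈ S, Tendsto (fun n => min 1 (ν (symmDiff (A n) L))) atTop (nhds 0))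
    ↔
    -- the AP0-type condition for submeasures
    (∀ A : ℕ → Set X, (∀ n, A n ∈ S) → (∀ m n, m ≤ n → A m ⊆ A n) →
      (∑' n : ℕ, ν (A (n + 1) \ A n)) ≠ ⊤ →
      ∃ L ∈ S, (∀ n, ν (A n \ L) = 0) ∧
        Tendsto (fun n => ν (L \ A n)) atTop (nhds 0)) := by
  -- derived closure properties of the field `S`
  have hSinter : ∀ A ∈ S, ∀ B ∈ S, A ∩ B ∈ S := by
    intro A hA B hB
    have h : A ∩ B = (Aᶜ ∪ Bᶜ)ᶜ := by
      rw [Set.compl_union, compl_compl, compl_compl]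
    rw [h]
    exact hScompl _ (hSunion _ (hScompl _ hA) _ (hScompl _ hB))
  have hSdiff : ∀ A ∈ S, ∀ B ∈ S, A \ B ∈ S := by
    intro A hA B hB
    rw [Set.diff_eq]
    exact hSinter _ hA _ (hScompl _ hB)
  have hSsymm : ∀ A ∈ S, ∀ B ∈ S, A ∆ B ∈ S := by
    intro A hA B hB
    rw [Set.symmDiff_def]
    exact hSunion _ (hSdiff _ hA _ hB) _ (hSdiff _ hB _ hA)
  -- basic estimates for the submeasure
  have hle2 : ∀ A ∈ S, ∀ B ∈ S, ∀ C ∈ S, A ⊆ B ∪ C → ν A ≤ ν B + ν C := by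
    intro A hA B hB C hC h
    exact le_trans (hνmono _ hA _ (hSunion _ hB _ hC) h) (hνsub _ hB _ hC)
  have hzero1 : ∀ A ∈ S, ∀ B ∈ S, A ⊆ B → ν B = 0 → ν A = 0 := by
    intro A hA B hB h hB0
    exact le_antisymm (hB0 ▸ hνmono _ hA _ hB h) (zero_le ..)
  have hzero2 : ∀ A ∈ S, ∀ B ∈ S, ∀ C ∈ S, A ⊆ B ∪ C → ν B = 0 → ν C = 0 → ν A = 0 := by
    intro A hA B hB C hC h hB0 hC0
    refine le_antisymm ?_ (zero_le ..)
    have := hle2 A hA B hB C hC h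
    rwa [hB0, hC0, add_zero] at this
  -- extracting a strict bound from the truncated distance
  have hminlt : ∀ x ε : ℝ≥0∞, min 1 x < ε → ε ≤ 1 → x < ε := by
    intro x ε h h1
    rcases le_or_gt 1 x with hx | hx
    · rw [min_eq_left hx] at h
      exact absurd (h.trans_le h1) (lt_irrefl 1)
    · rwa [min_eq_right hx.le] at h
  constructor
  · -- completeness → AP condition
    intro hcomp A hA hmono hsum
    set f : ℕ → ℝ≥0∞ := fun k => ν (A (k + 1) \ A k) with hf
    have hchain : ∀ m n : ℕ, ν (A (m + n) \ A m) ≤ ∑ i ∈ Finset.range n, f (i + m) := by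
      intro m n
      induction n with
      | zero => simp [hν0]
      | succ n ih =>
        have hsub : A (m + (n + 1)) \ A m ⊆ (A (m + n + 1) \ A (m + n)) ∪ (A (m + n) \ A m) := by
          intro x hx
          by_cases hx2 : x ∈ A (m + n)
          · exact Or.inr ⟨hx2, hx.2⟩
          · exact Or.inl ⟨hx.1, hx2⟩
        have h1 := hle2 _ (hSdiff _ (hA _) _ (hA _)) _ (hSdiff _ (hA _) _ (hA _)) _
          (hSdiff _ (hA _) _ (hA _)) hsub
        rw [Finset.sum_range_succ]
        calc ν (A (m + (n + 1)) \ A m) ≤ ν (A (m + n + 1) \ A (m + n)) + ν (A (m + n) \ A m) := h1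
        _ = ν (A (m + n) \ A m) + f (n + m) := by rw [hf]; simp only []; rw [add_comm, Nat.add_comm n m]
        _ ≤ (∑ i ∈ Finset.range n, f (i + m)) + f (n + m) := add_le_add_left ih _
    have htail : Tendsto (fun m => ∑' k, f (k + m)) atTop (𝓝 0) :=
      ENNReal.tendsto_sum_nat_add f hsum
    have hdist : ∀ m n : ℕ, m ≤ n → ν (A n \ A m) ≤ ∑' k, f (k + m) := by
      intro m n h
      have := hchain m (n - m)
      rw [Nat.add_sub_cancel' h] at this
      exact this.trans (ENNReal.sum_le_tsum _)
    have hcauchy : ∀ ε : ℝ≥0∞, 0 < ε → ∃ N : ℕ, ∀ m ≥ N, ∀ n ≥ N,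
        min 1 (ν (symmDiff (A m) (A n))) < ε := by
      intro ε hε
      obtain ⟨N, hN⟩ := eventually_atTop.mp (htail.eventually_lt_const hε)
      refine ⟨N, fun m hm n hn => ?_⟩
      have key : ∀ p q : ℕ, N ≤ p → p ≤ q → ν (symmDiff (A p) (A q)) < ε := by
        intro p q hp hpq
        rw [symmDiff_of_le (hmono p q hpq)]
        exact lt_of_le_of_lt (hdist p q hpq) (hN p hp)
      rcases le_total m n with h | h
      · exact lt_of_le_of_lt (min_le_right _ _) (key m n hm h)
      · rw [symmDiff_comm]
        exact lt_of_le_of_lt (min_le_right _ _) (key n m hn h)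
    obtain ⟨L, hLS, hTend⟩ := hcomp A hA hcauchy
    refine ⟨L, hLS, ?_, ?_⟩
    · intro m
      refine le_antisymm ?_ (zero_le ..)
      refine ENNReal.le_of_forall_pos_le_add ?_
      intro ε hε _
      have hδ : (0:ℝ≥0∞) < min (ε : ℝ≥0∞) 1 :=
        lt_min (by exact_mod_cast hε) zero_lt_one
      obtain ⟨n, hn1, hn2⟩ := ((hTend.eventually_lt_const hδ).and (eventually_ge_atTop m)).exists
      have hlt : ν (symmDiff (A n) L) < min (ε : ℝ≥0∞) 1 := hminlt _ _ hn1 (min_le_right _ _)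
      have hsub : A m \ L ⊆ symmDiff (A n) L := by
        intro x hx
        rw [Set.mem_symmDiff]
        exact Or.inl ⟨hmono m n hn2 hx.1, hx.2⟩
      have := hνmono _ (hSdiff _ (hA m) _ hLS) _ (hSsymm _ (hA n) _ hLS) hsub
      calc ν (A m \ L) ≤ ν (symmDiff (A n) L) := this
        _ ≤ min (ε : ℝ≥0∞) 1 := hlt.le
        _ ≤ 0 + ε := by rw [zero_add]; exact min_le_left _ _
    · rw [ENNReal.tendsto_nhds_zero]
      intro ε hε
      have hδ : (0:ℝ≥0∞) < min ε 1 := lt_min hε zero_lt_one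
      refine (hTend.eventually_lt_const hδ).mono ?_
      intro n hn
      have hlt : ν (symmDiff (A n) L) < min ε 1 := hminlt _ _ hn (min_le_right _ _)
      have hsub : L \ A n ⊆ symmDiff (A n) L := by
        intro x hx
        rw [Set.mem_symmDiff]
        exact Or.inr ⟨hx.1, hx.2⟩
      have := hνmono _ (hSdiff _ hLS _ (hA n)) _ (hSsymm _ (hA n) _ hLS) hsub
      exact le_trans this (le_trans hlt.le (min_le_left _ _))
  · -- AP condition → completeness
    intro H A hA hcauchy
    set g : ℕ → ℝ≥0∞ := fun k => 2⁻¹ ^ k with hg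
    have hgpos : ∀ k, 0 < g k := fun k => ENNReal.pow_pos (by norm_num) k
    have hg1 : ∀ k, g k ≤ 1 := fun k => pow_le_one' (by norm_num) k
    have hgmono : ∀ j k, j ≤ k → g k ≤ g j := fun j k h =>
      pow_le_pow_of_le_one (zero_le ..) (by norm_num) h
    have hghalf : ∀ k, g (k + 1) + g (k + 1) = g k := by
      intro k
      show (2⁻¹:ℝ≥0∞) ^ (k+1) + 2⁻¹ ^ (k+1) = 2⁻¹ ^ k
      rw [pow_succ, ← mul_add, ENNReal.inv_two_add_inv_two, mul_one]
    have hgsum : ∑' k, g k = 2 := by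
      rw [hg]; rw [ENNReal.tsum_geometric, ENNReal.one_sub_inv_two]; simp
    have hgtend : Tendsto g atTop (𝓝 0) :=
      ENNReal.tendsto_pow_atTop_nhds_zero_of_lt_one (by norm_num)
    -- choose a rapidly Cauchy subsequence
    choose N hN using fun k => hcauchy (g (k + 2)) (hgpos _)
    set n : ℕ → ℕ := fun k => ∑ i ∈ Finset.range (k + 1), N i with hn
    have hnmono : ∀ j k, j ≤ k → n j ≤ n k := by
      intro j k h
      exact Finset.sum_le_sum_of_subset (Finset.range_subset_range.mpr (by omega))
    have hnN : ∀ k, N k ≤ n k := fun k =>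
      Finset.single_le_sum (fun i _ => Nat.zero_le _) (Finset.self_mem_range_succ k)
    have key : ∀ k p q, n k ≤ p → n k ≤ q → ν (symmDiff (A p) (A q)) ≤ g (k + 2) := by
      intro k p q hp hq
      have := hN k p (le_trans (hnN k) hp) q (le_trans (hnN k) hq)
      exact (hminlt _ _ this (hg1 _)).le
    set B : ℕ → Set X := fun k => A (n k) with hB
    have hBS : ∀ k, B k ∈ S := fun k => hA (n k)
    set E : ℕ → Set X := fun k => symmDiff (B k) (B (k + 1)) with hE
    have hES : ∀ k, E k ∈ S := fun k => hSsymm _ (hBS k) _ (hBS (k + 1))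
    have hEle : ∀ k, ν (E k) ≤ g (k + 2) := fun k =>
      key k (n k) (n (k + 1)) le_rfl (hnmono k (k + 1) (Nat.le_succ k))
    have keyB : ∀ k p, k ≤ p → ν (symmDiff (B k) (B p)) ≤ g (k + 2) := fun k p h =>
      key k (n k) (n p) le_rfl (hnmono k p h)
    -- construct the sets F j ("union of E k for k ≥ j")
    have hF : ∀ j : ℕ, ∃ F ∈ S, (∀ k, j ≤ k → ν (E k \ F) = 0) ∧ ν F ≤ g (j + 1) := by
      intro j
      obtain ⟨P, hP0, hPs⟩ : ∃ P : ℕ → Set X, P 0 = E j ∧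
          ∀ m, P (m + 1) = P m ∪ E (j + m + 1) :=
        ⟨fun m => Nat.rec (E j) (fun m Pm => Pm ∪ E (j + m + 1)) m, rfl, fun _ => rfl⟩
      have hPS : ∀ m, P m ∈ S := by
        intro m
        induction m with
        | zero => rw [hP0]; exact hES j
        | succ m ih => rw [hPs]; exact hSunion _ ih _ (hES _)
      have hPmono : ∀ a b, a ≤ b → P a ⊆ P b := by
        have : Monotone P := monotone_nat_of_le_succ (fun m => by rw [hPs]; exact Set.subset_union_left)
        exact fun a b h => this h
      have hEP : ∀ i, E (j + i) ⊆ P i := by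
        intro i
        cases i with
        | zero => rw [hP0]
        | succ i => rw [hPs]; exact Set.subset_union_right
      have hPinc : ∀ m, ν (P (m + 1) \ P m) ≤ ν (E (j + m + 1)) := by
        intro m
        refine hνmono _ (hSdiff _ (hPS _) _ (hPS _)) _ (hES _) ?_
        rw [hPs]
        intro x hx
        exact (Set.union_diff_left.subset.trans Set.diff_subset) hx
      have hsumP : (∑' m, ν (P (m + 1) \ P m)) ≠ ⊤ := by
        have hle : ∀ m, ν (P (m + 1) \ P m) ≤ g m := by
          intro m
          exact le_trans (hPinc m) (le_trans (hEle _) (hgmono m (j + m + 3) (by omega)))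
        have := ENNReal.tsum_le_tsum hle
        rw [hgsum] at this
        exact ne_top_of_le_ne_top (by norm_num) this
      obtain ⟨F, hFS, hFnull, hFtend⟩ := H P hPS hPmono hsumP
      refine ⟨F, hFS, ?_, ?_⟩
      · intro k hk
        have hkE : E k = E (j + (k - j)) := by rw [Nat.add_sub_cancel' hk]
        refine hzero1 _ (hSdiff _ (hES k) _ hFS) _ (hSdiff _ (hPS (k - j)) _ hFS) ?_ (hFnull _)
        rw [hkE]
        exact Set.diff_subset_diff_left (hEP (k - j))
      · -- ν F ≤ g (j+1)
        have hPbound : ∀ m, ν (P m) ≤ ∑ i ∈ Finset.range (m + 1), g (j + i + 2) := by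
          intro m
          induction m with
          | zero => rw [hP0]; simpa using hEle j
          | succ m ih =>
            rw [hPs, Finset.sum_range_succ]
            refine le_trans (hνsub _ (hPS m) _ (hES _)) ?_
            exact add_le_add ih (hEle _)
        have hsumg : ∀ m : ℕ, (∑ i ∈ Finset.range (m + 1), g (j + i + 2)) ≤ g (j + 1) := by
          intro m
          have h1 : (∑ i ∈ Finset.range (m + 1), g (j + i + 2)) ≤ ∑' i, g (j + 2 + i) := by
            have heq : (∑ i ∈ Finset.range (m + 1), g (j + i + 2))
                = ∑ i ∈ Finset.range (m + 1), g (j + 2 + i) :=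
              Finset.sum_congr rfl (fun i _ => by rw [show j + i + 2 = j + 2 + i by omega])
            rw [heq]
            exact ENNReal.sum_le_tsum _
          have h2 : (∑' i : ℕ, g (j + 2 + i)) = g (j + 1) := by
            rw [hg]
            simp only []
            calc (∑' i : ℕ, (2⁻¹:ℝ≥0∞) ^ (j + 2 + i))
                = ∑' i : ℕ, (2⁻¹:ℝ≥0∞) ^ (j + 2) * 2⁻¹ ^ i := by
                  exact tsum_congr (fun i => pow_add _ _ _)
              _ = (2⁻¹:ℝ≥0∞) ^ (j + 2) * ∑' i : ℕ, (2⁻¹:ℝ≥0∞) ^ i := ENNReal.tsum_mul_left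
              _ = (2⁻¹:ℝ≥0∞) ^ (j + 2) * 2 := by
                  rw [ENNReal.tsum_geometric, ENNReal.one_sub_inv_two]; simp
              _ = (2⁻¹:ℝ≥0∞) ^ (j + 1) := by
                  rw [pow_succ, mul_assoc, ENNReal.inv_mul_cancel (by norm_num) (by norm_num),
                    mul_one]
          rw [← h2]; exact h1
        refine ENNReal.le_of_forall_pos_le_add ?_
        intro ε hε _
        obtain ⟨m₀, hm₀⟩ := ENNReal.tendsto_atTop_zero.mp hFtend (ε : ℝ≥0∞)
          (by exact_mod_cast hε)
        have hsubF : F ⊆ P m₀ ∪ (F \ P m₀) := by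
          intro x hx
          by_cases h : x ∈ P m₀
          · exact Or.inl h
          · exact Or.inr ⟨hx, h⟩
        have := hle2 _ hFS _ (hPS m₀) _ (hSdiff _ hFS _ (hPS m₀)) hsubF
        calc ν F ≤ ν (P m₀) + ν (F \ P m₀) := this
          _ ≤ g (j + 1) + ε := add_le_add (le_trans (hPbound m₀) (hsumg m₀)) (hm₀ m₀ le_rfl)
    choose F hFS hFnull hFle using hF
    -- the "symmetric differences are null off F j" lemma
    have hsymmnull : ∀ j k, j ≤ k → ν (symmDiff (B j) (B k) \ F j) = 0 := by
      intro j k hk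
      induction k, hk using Nat.le_induction with
      | base => rw [symmDiff_self]; simpa using hν0
      | succ k hk ih =>
        refine hzero2 _ (hSdiff _ (hSsymm _ (hBS j) _ (hBS (k+1))) _ (hFS j))
          _ (hSdiff _ (hSsymm _ (hBS j) _ (hBS k)) _ (hFS j))
          _ (hSdiff _ (hES k) _ (hFS j)) ?_ ih (hFnull j k hk)
        intro x hx
        obtain ⟨hx1, hx2⟩ := hx
        rw [Set.mem_symmDiff] at hx1
        by_cases hxk : x ∈ B k
        · rcases hx1 with ⟨hj, hk1⟩ | ⟨hk1, hj⟩
          · exact Or.inr ⟨by rw [hE]; rw [Set.mem_symmDiff]; exact Or.inl ⟨hxk, hk1⟩, hx2⟩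
          · exact Or.inl ⟨by rw [Set.mem_symmDiff]; exact Or.inr ⟨hxk, hj⟩, hx2⟩
        · rcases hx1 with ⟨hj, hk1⟩ | ⟨hk1, hj⟩
          · exact Or.inl ⟨by rw [Set.mem_symmDiff]; exact Or.inl ⟨hj, hxk⟩, hx2⟩
          · exact Or.inr ⟨by rw [hE]; rw [Set.mem_symmDiff]; exact Or.inr ⟨hk1, hxk⟩, hx2⟩
    -- construct the increasing sequence C
    obtain ⟨C, hC0, hCs⟩ : ∃ C : ℕ → Set X, C 0 = B 0 \ F 0 ∧
        ∀ m, C (m + 1) = C m ∪ (B (m + 1) \ F (m + 1)) :=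
      ⟨fun m => Nat.rec (B 0 \ F 0) (fun m Cm => Cm ∪ (B (m + 1) \ F (m + 1))) m, rfl, fun _ => rfl⟩
    have hCS : ∀ m, C m ∈ S := by
      intro m
      induction m with
      | zero => rw [hC0]; exact hSdiff _ (hBS 0) _ (hFS 0)
      | succ m ih => rw [hCs]; exact hSunion _ ih _ (hSdiff _ (hBS _) _ (hFS _))
    have hCmono : ∀ a b, a ≤ b → C a ⊆ C b := by
      have : Monotone C := monotone_nat_of_le_succ (fun m => by rw [hCs]; exact Set.subset_union_left)
      exact fun a b h => this h
    have hBC : ∀ k, B k \ F k ⊆ C k := by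
      intro k
      cases k with
      | zero => rw [hC0]
      | succ k => rw [hCs]; exact Set.subset_union_right
    have hCinc : ∀ m, ν (C (m + 1) \ C m) ≤ g m := by
      intro m
      have hsub : C (m + 1) \ C m ⊆ E m ∪ F m := by
        intro x hx
        rw [hCs] at hx
        obtain ⟨hx1, hx2⟩ := hx
        rcases hx1 with h | h
        · exact absurd h hx2
        · by_cases hxm : x ∈ F m
          · exact Or.inr hxm
          · have hxBm : x ∉ B m := fun hB' => hx2 (hBC m ⟨hB', hxm⟩)
            exact Or.inl (by rw [hE]; rw [Set.mem_symmDiff]; exact Or.inr ⟨h.1, hxBm⟩)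
      have := hle2 _ (hSdiff _ (hCS _) _ (hCS _)) _ (hES m) _ (hFS m) hsub
      calc ν (C (m + 1) \ C m) ≤ ν (E m) + ν (F m) := this
        _ ≤ g (m + 2) + g (m + 1) := add_le_add (hEle m) (hFle m)
        _ ≤ g (m + 1) + g (m + 1) := add_le_add_left (hgmono _ _ (by omega)) _
        _ = g m := hghalf m
    have hsumC : (∑' m, ν (C (m + 1) \ C m)) ≠ ⊤ := by
      have := ENNReal.tsum_le_tsum hCinc
      rw [hgsum] at this
      exact ne_top_of_le_ne_top (by norm_num) this
    obtain ⟨L, hLS, hLnull, hLtend⟩ := H C hCS hCmono hsumC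
    -- the sequence C is null outside B k
    have hCBnull : ∀ m k, m ≤ k → ν (C m \ B k) = 0 := by
      intro m
      induction m with
      | zero =>
        intro k hk
        refine hzero1 _ (hSdiff _ (hCS 0) _ (hBS k)) _
          (hSdiff _ (hSsymm _ (hBS 0) _ (hBS k)) _ (hFS 0)) ?_ (hsymmnull 0 k (Nat.zero_le k))
        intro x hx
        rw [hC0] at hx
        obtain ⟨⟨hx1, hx2⟩, hx3⟩ := hx
        exact ⟨by rw [Set.mem_symmDiff]; exact Or.inl ⟨hx1, hx3⟩, hx2⟩
      | succ m ih =>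
        intro k hk
        refine hzero2 _ (hSdiff _ (hCS (m+1)) _ (hBS k)) _ (hSdiff _ (hCS m) _ (hBS k))
          _ (hSdiff _ (hSsymm _ (hBS (m+1)) _ (hBS k)) _ (hFS (m+1))) ?_
          (ih k (by omega)) (hsymmnull (m+1) k hk)
        intro x hx
        rw [hCs] at hx
        obtain ⟨hx1, hx3⟩ := hx
        rcases hx1 with h | h
        · exact Or.inl ⟨h, hx3⟩
        · exact Or.inr ⟨by rw [Set.mem_symmDiff]; exact Or.inl ⟨h.1, hx3⟩, h.2⟩
    -- final assembly
    refine ⟨L, hLS, ?_⟩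
    rw [ENNReal.tendsto_atTop_zero]
    intro ε hε
    have hε2 : (0:ℝ≥0∞) < ε / 2 := ENNReal.half_pos hε.ne'
    obtain ⟨k₁, hk₁⟩ := ENNReal.tendsto_atTop_zero.mp hLtend (ε / 2) hε2
    obtain ⟨k₂, hk₂⟩ := ENNReal.tendsto_atTop_zero.mp hgtend (ε / 2) hε2
    set K := max k₁ k₂ with hK
    refine ⟨n K, fun m hm => ?_⟩
    -- estimates
    have h2 : ν (B K \ L) ≤ g (K + 1) := by
      have hsub : B K \ L ⊆ (B K \ C K) ∪ (C K \ L) := by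
        intro x hx
        by_cases h : x ∈ C K
        · exact Or.inr ⟨h, hx.2⟩
        · exact Or.inl ⟨hx.1, h⟩
      have hBCK : ν (B K \ C K) ≤ ν (F K) := by
        refine hνmono _ (hSdiff _ (hBS K) _ (hCS K)) _ (hFS K) ?_
        intro x hx
        by_contra h
        exact hx.2 (hBC K ⟨hx.1, h⟩)
      calc ν (B K \ L)
          ≤ ν (B K \ C K) + ν (C K \ L) :=
            hle2 _ (hSdiff _ (hBS K) _ hLS) _ (hSdiff _ (hBS K) _ (hCS K))
              _ (hSdiff _ (hCS K) _ hLS) hsub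
        _ = ν (B K \ C K) := by rw [hLnull K, add_zero]
        _ ≤ ν (F K) := hBCK
        _ ≤ g (K + 1) := hFle K
    have h3 : ν (L \ B K) ≤ ε / 2 := by
      have hsub : L \ B K ⊆ (L \ C K) ∪ (C K \ B K) := by
        intro x hx
        by_cases h : x ∈ C K
        · exact Or.inr ⟨h, hx.2⟩
        · exact Or.inl ⟨hx.1, h⟩
      calc ν (L \ B K)
          ≤ ν (L \ C K) + ν (C K \ B K) :=
            hle2 _ (hSdiff _ hLS _ (hBS K)) _ (hSdiff _ hLS _ (hCS K))
              _ (hSdiff _ (hCS K) _ (hBS K)) hsub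
        _ = ν (L \ C K) := by rw [hCBnull K K le_rfl, add_zero]
        _ ≤ ε / 2 := hk₁ K (le_max_left _ _)
    have hBL : ν (symmDiff (B K) L) ≤ g (K + 1) + ε / 2 := by
      rw [Set.symmDiff_def]
      exact le_trans (hνsub _ (hSdiff _ (hBS K) _ hLS) _ (hSdiff _ hLS _ (hBS K)))
        (add_le_add h2 h3)
    have h1 : ν (symmDiff (A m) (B K)) ≤ g (K + 2) := key K m (n K) hm le_rfl
    have htri : ν (symmDiff (A m) L) ≤ ν (symmDiff (A m) (B K)) + ν (symmDiff (B K) L) :=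
      hle2 _ (hSsymm _ (hA m) _ hLS) _ (hSsymm _ (hA m) _ (hBS K))
        _ (hSsymm _ (hBS K) _ hLS) (symmDiff_triangle _ _ _)
    calc min 1 (ν (symmDiff (A m) L)) ≤ ν (symmDiff (A m) L) := min_le_right _ _
      _ ≤ ν (symmDiff (A m) (B K)) + ν (symmDiff (B K) L) := htri
      _ ≤ g (K + 2) + (g (K + 1) + ε / 2) := add_le_add h1 hBL
      _ = (g (K + 2) + g (K + 1)) + ε / 2 := by rw [add_assoc]
      _ ≤ (g (K + 1) + g (K + 1)) + ε / 2 :=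
          add_le_add_left (add_le_add_left (hgmono _ _ (by omega)) _) _
      _ = g K + ε / 2 := by rw [hghalf K]
      _ ≤ ε / 2 + ε / 2 := add_le_add_left (hk₂ K (le_max_right _ _)) _
      _ = ε := ENNReal.add_halves ε
end

section
/- Let Σ be a field of subsets of a nonempty set X and let μ : Σ → [0,∞) be a nonnegative, finitely additive, bounded map (μ(A∪B) = μ(A)+μ(B) for all disjoint A, B ∈ Σ). Then the pseudometric space (Σ, d_μ) is complete if and only if for every increasing sequence (A_n)_{n∈ℕ} in Σ there exists A ∈ Σ such that μ(A_n \ A) = 0 for all n ∈ ℕ and μ(A) = lim_{n→∞} μ(A_n). -/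
/-!
For an increasing sequence, `d_μ`-convergence to `L` is exactly the AP0 condition, and a bounded
monotone `μ` makes increasing sequences `d_μ`-Cauchy; so completeness gives AP0, and AP0 says that
increasing (hence, through complements, decreasing) sequences converge.

Conversely, a Cauchy sequence has a subsequence `B` with `∑ μ (B k ∆ B (k + 1)) < ∞`. The limit
`V k` of the partial unions `B k ∪ ⋯ ∪ B (k + m)` is an essential supremum of the tail
`(B j)_{j ≥ k}` and lies within the tail sum of `B k`. The `V k` therefore decrease up to null
sets, so the finite intersections `V 0 ∩ ⋯ ∩ V k` are decreasing and `d_μ`-close to `V k`; their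
limit is the limit of `B`, hence of the whole sequence.
-/

open Filter Topology Set MeasureTheory
open scoped symmDiff

theorem tendsto_min_one_iff {α : Type*} {l : Filter α} {f : α → ℝ} :
    Tendsto (fun a => min 1 (f a)) l (𝓝 0) ↔ Tendsto f l (𝓝 0) := by
  constructor
  · intro h
    refine h.congr' ?_
    filter_upwards [h.eventually (eventually_lt_nhds one_pos)] with a ha
    exact min_eq_right (min_lt_iff.1 ha |>.resolve_left (lt_irrefl 1)).le
  · intro h
    simpa using (tendsto_const_nhds (x := (1 : ℝ))).min h

theorem cauchy_min_one_iff {u : ℕ → ℕ → ℝ} :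
    (∀ ε > 0, ∃ N, ∀ m ≥ N, ∀ n ≥ N, min 1 (u m n) < ε) ↔
      ∀ ε > 0, ∃ N, ∀ m ≥ N, ∀ n ≥ N, u m n < ε := by
  constructor
  · intro h ε hε
    obtain ⟨N, hN⟩ := h (min ε 1) (lt_min hε one_pos)
    refine ⟨N, fun m hm n hn => ?_⟩
    have := (min_lt_iff.1 (hN m hm n hn)).resolve_left (min_le_right ε 1).not_gt
    exact this.trans_le (min_le_left ε 1)
  · intro h ε hε
    obtain ⟨N, hN⟩ := h ε hε
    exact ⟨N, fun m hm n hn => (min_le_right _ _).trans_lt (hN m hm n hn)⟩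

theorem MeasureTheory.IsSetAlgebra.symmDiff_mem {X : Type*} {S : Set (Set X)} (hS : IsSetAlgebra S)
    {A B : Set X} (hA : A ∈ S) (hB : B ∈ S) : A ∆ B ∈ S :=
  hS.union_mem (hS.sdiff_mem hA hB) (hS.sdiff_mem hB hA)

theorem MeasureTheory.IsSetAlgebra.dissipate_mem {X : Type*} {S : Set (Set X)} (hS : IsSetAlgebra S)
    {A : ℕ → Set X} (hA : ∀ n, A n ∈ S) (n : ℕ) : dissipate A n ∈ S := by
  induction n with
  | zero => simpa using hA 0
  | succ n ih => simpa using hS.inter_mem ih (hA (n + 1))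

section

variable {X : Type*}

structure IsAdditiveContent (S : Set (Set X)) (μ : Set X → ℝ) : Prop where
  isSetAlgebra : IsSetAlgebra S
  nonneg : ∀ A ∈ S, 0 ≤ μ A
  union : ∀ A ∈ S, ∀ B ∈ S, Disjoint A B → μ (A ∪ B) = μ A + μ B

namespace IsAdditiveContent

variable {S : Set (Set X)} {μ : Set X → ℝ} {A B C : Set X}

theorem measure_empty (hμ : IsAdditiveContent S μ) : μ ∅ = 0 := by
  have hempty := hμ.isSetAlgebra.empty_mem
  have := hμ.union ∅ hempty ∅ hempty (disjoint_empty _)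
  rw [empty_union] at this
  linarith

theorem measure_inter_add_diff (hμ : IsAdditiveContent S μ) (hA : A ∈ S) (hB : B ∈ S) :
    μ (A ∩ B) + μ (A \ B) = μ A := by
  rw [← hμ.union _ (hμ.isSetAlgebra.inter_mem hA hB) _ (hμ.isSetAlgebra.sdiff_mem hA hB)
    disjoint_sdiff_inter.symm, inter_union_sdiff]

theorem mono (hμ : IsAdditiveContent S μ) (hA : A ∈ S) (hB : B ∈ S) (h : A ⊆ B) :
    μ A ≤ μ B := by
  have := hμ.measure_inter_add_diff hB hA
  rw [inter_eq_right.2 h] at this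
  linarith [hμ.nonneg _ (hμ.isSetAlgebra.sdiff_mem hB hA)]

theorem measure_union_le (hμ : IsAdditiveContent S μ) (hA : A ∈ S) (hB : B ∈ S) :
    μ (A ∪ B) ≤ μ A + μ B := by
  rw [← union_sdiff_self, hμ.union _ hA _ (hμ.isSetAlgebra.sdiff_mem hB hA) disjoint_sdiff_right]
  gcongr
  exact hμ.mono (hμ.isSetAlgebra.sdiff_mem hB hA) hB sdiff_subset

theorem le_add_of_subset_union (hμ : IsAdditiveContent S μ) (hA : A ∈ S) (hB : B ∈ S)
    (hC : C ∈ S) (h : A ⊆ B ∪ C) : μ A ≤ μ B + μ C :=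
  (hμ.mono hA (hμ.isSetAlgebra.union_mem hB hC) h).trans (hμ.measure_union_le hB hC)

theorem measure_symmDiff_triangle (hμ : IsAdditiveContent S μ) (hA : A ∈ S) (hB : B ∈ S)
    (hC : C ∈ S) : μ (A ∆ C) ≤ μ (A ∆ B) + μ (B ∆ C) :=
  have hS := hμ.isSetAlgebra
  hμ.le_add_of_subset_union (hS.symmDiff_mem hA hC) (hS.symmDiff_mem hA hB)
    (hS.symmDiff_mem hB hC) (symmDiff_triangle A B C)

theorem measure_diff_triangle (hμ : IsAdditiveContent S μ) (hA : A ∈ S) (hB : B ∈ S)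
    (hC : C ∈ S) : μ (A \ C) ≤ μ (A \ B) + μ (B \ C) :=
  have hS := hμ.isSetAlgebra
  hμ.le_add_of_subset_union (hS.sdiff_mem hA hC) (hS.sdiff_mem hA hB) (hS.sdiff_mem hB hC)
    (sdiff_triangle A B C)

theorem abs_sub_le_measure_symmDiff (hμ : IsAdditiveContent S μ) (hA : A ∈ S) (hB : B ∈ S) :
    |μ A - μ B| ≤ μ (A ∆ B) := by
  have hS := hμ.isSetAlgebra
  have hAB := hμ.le_add_of_subset_union hA (hS.symmDiff_mem hA hB) hB (le_symmDiff_sup_right A B)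
  have hBA := hμ.le_add_of_subset_union hB (hS.symmDiff_mem hA hB) hA (le_symmDiff_sup_left A B)
  rw [abs_le]
  constructor <;> linarith

theorem measure_symmDiff_of_subset (hμ : IsAdditiveContent S μ) (hA : A ∈ S) (hB : B ∈ S)
    (h : A ⊆ B) : μ (A ∆ B) = μ B - μ A := by
  have := hμ.measure_inter_add_diff hB hA
  rw [inter_eq_right.2 h] at this
  rw [symmDiff_of_le h]
  linarith

theorem measure_diff_eq_zero_of_tendsto (hμ : IsAdditiveContent S μ) {A : ℕ → Set X}
    (hA : ∀ n, A n ∈ S) {L M : Set X} (hL : L ∈ S) (hM : M ∈ S)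
    (hlim : Tendsto (fun n => μ (A n ∆ L)) atTop (𝓝 0)) (hnull : ∀ n, μ (A n \ M) = 0) :
    μ (L \ M) = 0 := by
  have hS := hμ.isSetAlgebra
  refine le_antisymm (ge_of_tendsto' hlim fun n => ?_) (hμ.nonneg _ (hS.sdiff_mem hL hM))
  calc μ (L \ M) ≤ μ (L \ A n) + μ (A n \ M) := hμ.measure_diff_triangle hL (hA n) hM
    _ ≤ μ (A n ∆ L) := by
      rw [hnull n, add_zero]
      exact hμ.mono (hS.sdiff_mem hL (hA n)) (hS.symmDiff_mem (hA n) hL) fun _ hx => Or.inr hx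

theorem tendsto_symmDiff_iff_of_monotone (hμ : IsAdditiveContent S μ) {A : ℕ → Set X}
    (hA : ∀ n, A n ∈ S) (hmono : Monotone A) {L : Set X} (hL : L ∈ S) :
    Tendsto (fun n => μ (A n ∆ L)) atTop (𝓝 0) ↔
      (∀ n, μ (A n \ L) = 0) ∧ Tendsto (fun n => μ (A n)) atTop (𝓝 (μ L)) := by
  have hS := hμ.isSetAlgebra
  constructor
  · intro hlim
    refine ⟨fun n => le_antisymm ?_ (hμ.nonneg _ (hS.sdiff_mem (hA n) hL)), ?_⟩
    · refine ge_of_tendsto hlim (eventually_atTop.2 ⟨n, fun m hm => ?_⟩)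
      exact hμ.mono (hS.sdiff_mem (hA n) hL) (hS.symmDiff_mem (hA m) hL)
        (fun x hx => Or.inl ⟨hmono hm hx.1, hx.2⟩)
    · rw [tendsto_iff_dist_tendsto_zero]
      exact squeeze_zero (fun n => dist_nonneg)
        (fun n => hμ.abs_sub_le_measure_symmDiff (hA n) hL) hlim
  · rintro ⟨hnull, hlim⟩
    have hle : ∀ n, μ (A n ∆ L) ≤ μ L - μ (A n) := fun n => by
      have h1 := hμ.measure_inter_add_diff (hA n) hL
      have h2 := hμ.measure_inter_add_diff hL (hA n)
      have h3 := hμ.measure_union_le (hS.sdiff_mem (hA n) hL) (hS.sdiff_mem hL (hA n))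
      rw [inter_comm] at h1
      rw [Set.symmDiff_def]
      linarith [hnull n]
    refine squeeze_zero (fun n => hμ.nonneg _ (hS.symmDiff_mem (hA n) hL)) hle ?_
    simpa using hlim.const_sub (μ L)

theorem measure_accumulate_diff_eq_zero (hμ : IsAdditiveContent S μ) {B : ℕ → Set X}
    (hB : ∀ n, B n ∈ S) {M : Set X} (hM : M ∈ S) (hnull : ∀ n, μ (B n \ M) = 0) (m : ℕ) :
    μ (accumulate B m \ M) = 0 := by
  have hS := hμ.isSetAlgebra
  induction m with
  | zero => simpa using hnull 0
  | succ m ih =>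
    refine le_antisymm ?_ (hμ.nonneg _ (hS.sdiff_mem (hS.isSetRing.accumulate_mem hB _) hM))
    rw [accumulate_succ, union_sdiff_distrib]
    linarith [hμ.measure_union_le (hS.sdiff_mem (hS.isSetRing.accumulate_mem hB m) hM)
      (hS.sdiff_mem (hB (m + 1)) hM), hnull (m + 1)]

theorem measure_accumulate_diff_le_sum (hμ : IsAdditiveContent S μ) {B : ℕ → Set X}
    (hB : ∀ n, B n ∈ S) (m : ℕ) :
    μ (accumulate B m \ B 0) ≤ ∑ j ∈ Finset.range m, μ (B j ∆ B (j + 1)) := by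
  have hS := hμ.isSetAlgebra
  induction m with
  | zero => simp [hμ.measure_empty]
  | succ m ih =>
    have hsub : accumulate B (m + 1) \ B 0 ⊆ (accumulate B m \ B 0) ∪ B m ∆ B (m + 1) := by
      intro x ⟨hx, hx0⟩
      rw [accumulate_succ] at hx
      by_cases hxm : x ∈ B m
      · exact Or.inl ⟨hx.elim id fun _ => subset_accumulate hxm, hx0⟩
      · rcases hx with hx | hx
        · exact Or.inl ⟨hx, hx0⟩
        · exact Or.inr (Or.inr ⟨hx, hxm⟩)
    have hacc := hS.isSetRing.accumulate_mem hB
    rw [Finset.sum_range_succ]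
    linarith [hμ.le_add_of_subset_union (hS.sdiff_mem (hacc _) (hB 0))
      (hS.sdiff_mem (hacc m) (hB 0)) (hS.symmDiff_mem (hB m) (hB (m + 1))) hsub]

theorem measure_diff_dissipate_eq_zero (hμ : IsAdditiveContent S μ) {V : ℕ → Set X}
    (hV : ∀ n, V n ∈ S) (hVV : ∀ n, μ (V (n + 1) \ V n) = 0) (n : ℕ) :
    μ (V n \ dissipate V n) = 0 := by
  have hS := hμ.isSetAlgebra
  induction n with
  | zero => simp [hμ.measure_empty]
  | succ n ih =>
    refine le_antisymm ?_ (hμ.nonneg _ (hS.sdiff_mem (hV _) (hS.dissipate_mem hV _)))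
    rw [dissipate_succ, sdiff_inter_self_eq_sdiff]
    linarith [hμ.measure_diff_triangle (hV (n + 1)) (hV n) (hS.dissipate_mem hV n), hVV n]

theorem measure_symmDiff_le_tsum (hμ : IsAdditiveContent S μ) {B : ℕ → Set X}
    (hB : ∀ n, B n ∈ S) (hsum : Summable fun n => μ (B n ∆ B (n + 1))) {V : Set X} (hV : V ∈ S)
    (hlim : Tendsto (fun m => μ (accumulate B m ∆ V)) atTop (𝓝 0)) :
    μ (B 0 ∆ V) ≤ ∑' n, μ (B n ∆ B (n + 1)) := by
  have hS := hμ.isSetAlgebra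
  have hacc := hS.isSetRing.accumulate_mem hB
  refine ge_of_tendsto (by simpa using hlim.const_add (∑' n, μ (B n ∆ B (n + 1))))
    (Eventually.of_forall fun m => ?_)
  have hB0 : B 0 ⊆ accumulate B m := subset_accumulate.trans (monotone_accumulate (Nat.zero_le m))
  calc μ (B 0 ∆ V) ≤ μ (B 0 ∆ accumulate B m) + μ (accumulate B m ∆ V) :=
        hμ.measure_symmDiff_triangle (hB 0) (hacc m) hV
    _ ≤ ∑' n, μ (B n ∆ B (n + 1)) + μ (accumulate B m ∆ V) := by
      rw [symmDiff_of_le hB0]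
      gcongr
      exact (hμ.measure_accumulate_diff_le_sum hB m).trans <| hsum.sum_le_tsum _
        fun n _ => hμ.nonneg _ (hS.symmDiff_mem (hB n) (hB (n + 1)))

theorem cauchy_symmDiff_of_monotone (hμ : IsAdditiveContent S μ) (hbdd : ∃ M, ∀ A ∈ S, μ A ≤ M)
    {A : ℕ → Set X} (hA : ∀ n, A n ∈ S) (hmono : Monotone A) :
    ∀ ε > 0, ∃ N, ∀ m ≥ N, ∀ n ≥ N, μ (A m ∆ A n) < ε := by
  obtain ⟨M, hM⟩ := hbdd
  have hμA : Monotone fun n => μ (A n) := fun m n h => hμ.mono (hA m) (hA n) (hmono h)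
  have hcauchy := (tendsto_atTop_ciSup hμA ⟨M, forall_mem_range.2 fun n => hM _ (hA n)⟩).cauchySeq
  have hdist : ∀ m n, μ (A m ∆ A n) = dist (μ (A m)) (μ (A n)) := by
    intro m n
    rcases le_total m n with h | h
    · rw [hμ.measure_symmDiff_of_subset (hA m) (hA n) (hmono h), Real.dist_eq, abs_sub_comm,
        abs_of_nonneg (sub_nonneg.2 (hμA h))]
    · rw [symmDiff_comm, hμ.measure_symmDiff_of_subset (hA n) (hA m) (hmono h), Real.dist_eq,
        abs_of_nonneg (sub_nonneg.2 (hμA h))]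
  simpa only [hdist] using Metric.cauchySeq_iff.1 hcauchy

end IsAdditiveContent

def HasMonotoneLimits (S : Set (Set X)) (μ : Set X → ℝ) : Prop :=
  ∀ A : ℕ → Set X, (∀ n, A n ∈ S) → Monotone A →
    ∃ L ∈ S, Tendsto (fun n => μ (A n ∆ L)) atTop (𝓝 0)

theorem IsAdditiveContent.hasMonotoneLimits_iff {S : Set (Set X)} {μ : Set X → ℝ}
    (hμ : IsAdditiveContent S μ) :
    HasMonotoneLimits S μ ↔ ∀ A : ℕ → Set X, (∀ n, A n ∈ S) → (∀ m n, m ≤ n → A m ⊆ A n) →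
      ∃ L ∈ S, (∀ n, μ (A n \ L) = 0) ∧ Tendsto (fun n => μ (A n)) atTop (𝓝 (μ L)) := by
  refine forall₃_congr fun A hA hmono => exists_congr fun L => and_congr_right fun hL => ?_
  exact hμ.tendsto_symmDiff_iff_of_monotone hA hmono hL

namespace HasMonotoneLimits

variable {S : Set (Set X)} {μ : Set X → ℝ}

theorem exists_tendsto_of_antitone (h : HasMonotoneLimits S μ) (hS : IsSetAlgebra S)
    {A : ℕ → Set X} (hA : ∀ n, A n ∈ S) (hanti : Antitone A) :
    ∃ L ∈ S, Tendsto (fun n => μ (A n ∆ L)) atTop (𝓝 0) := by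
  obtain ⟨L, hL, hlim⟩ := h (fun n => (A n)ᶜ) (fun n => hS.compl_mem (hA n))
    fun m n hmn => compl_subset_compl.2 (hanti hmn)
  refine ⟨Lᶜ, hS.compl_mem hL, ?_⟩
  have hcompl : ∀ n, A n ∆ Lᶜ = (A n)ᶜ ∆ L := fun n => by
    rw [← compl_symmDiff_compl, compl_compl]
  simpa only [hcompl] using hlim

theorem exists_essSup (h : HasMonotoneLimits S μ) (hμ : IsAdditiveContent S μ)
    {B : ℕ → Set X} (hB : ∀ n, B n ∈ S) :
    ∃ V ∈ S, Tendsto (fun m => μ (accumulate B m ∆ V)) atTop (𝓝 0) ∧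
      (∀ n, μ (B n \ V) = 0) ∧ ∀ M ∈ S, (∀ n, μ (B n \ M) = 0) → μ (V \ M) = 0 := by
  have hS := hμ.isSetAlgebra
  have hacc := hS.isSetRing.accumulate_mem hB
  obtain ⟨V, hV, hlim⟩ := h _ hacc monotone_accumulate
  have hnull := ((hμ.tendsto_symmDiff_iff_of_monotone hacc monotone_accumulate hV).1 hlim).1
  refine ⟨V, hV, hlim, fun n => le_antisymm ?_ (hμ.nonneg _ (hS.sdiff_mem (hB n) hV)),
    fun M hM hBM => hμ.measure_diff_eq_zero_of_tendsto hacc hV hM hlim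
      (hμ.measure_accumulate_diff_eq_zero hB hM hBM)⟩
  exact (hnull n).le.trans' <|
    hμ.mono (hS.sdiff_mem (hB n) hV) (hS.sdiff_mem (hacc n) hV)
      (sdiff_subset_sdiff_left subset_accumulate)

theorem exists_tendsto_of_summable (h : HasMonotoneLimits S μ) (hμ : IsAdditiveContent S μ)
    {B : ℕ → Set X} (hB : ∀ n, B n ∈ S) (hsum : Summable fun n => μ (B n ∆ B (n + 1))) :
    ∃ L ∈ S, Tendsto (fun n => μ (B n ∆ L)) atTop (𝓝 0) := by
  have hS := hμ.isSetAlgebra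
  choose V hV hVlim hVub hVlub using fun k => h.exists_essSup hμ fun n => hB (n + k)
  have hBV : ∀ k, μ (B k ∆ V k) ≤ ∑' n, μ (B (n + k) ∆ B (n + k + 1)) := fun k => by
    have hsum_k : Summable fun n => μ (B (n + k) ∆ B (n + 1 + k)) := by
      simpa only [Nat.add_right_comm] using (summable_nat_add_iff k).2 hsum
    simpa only [Nat.add_right_comm, zero_add] using
      hμ.measure_symmDiff_le_tsum (fun n => hB (n + k)) hsum_k (hV k) (hVlim k)
  have hVV : ∀ k, μ (V (k + 1) \ V k) = 0 := fun k =>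
    hVlub (k + 1) _ (hV k) fun n => by
      rw [show n + (k + 1) = n + 1 + k by omega]
      exact hVub k (n + 1)
  obtain ⟨L, hL, hWL⟩ := h.exists_tendsto_of_antitone hS (hS.dissipate_mem hV) antitone_dissipate
  refine ⟨L, hL, squeeze_zero (fun k => hμ.nonneg _ (hS.symmDiff_mem (hB k) hL)) (fun k => ?_)
    (by simpa using (tendsto_sum_nat_add fun n => μ (B n ∆ B (n + 1))).add hWL)⟩
  have hW := hS.dissipate_mem hV k
  have hVW : μ (V k ∆ dissipate V k) = 0 := by
    rw [symmDiff_of_ge (dissipate_subset le_rfl)]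
    exact hμ.measure_diff_dissipate_eq_zero hV hVV k
  calc μ (B k ∆ L) ≤ μ (B k ∆ V k) + μ (V k ∆ L) := hμ.measure_symmDiff_triangle (hB k) (hV k) hL
    _ ≤ μ (B k ∆ V k) + (μ (V k ∆ dissipate V k) + μ (dissipate V k ∆ L)) := by
      gcongr
      exact hμ.measure_symmDiff_triangle (hV k) hW hL
    _ ≤ ∑' n, μ (B (n + k) ∆ B (n + k + 1)) + μ (dissipate V k ∆ L) := by
      rw [hVW, zero_add]
      gcongr
      exact hBV k

theorem exists_tendsto_of_cauchy (h : HasMonotoneLimits S μ) (hμ : IsAdditiveContent S μ)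
    {A : ℕ → Set X} (hA : ∀ n, A n ∈ S)
    (hcauchy : ∀ ε > 0, ∃ N, ∀ m ≥ N, ∀ n ≥ N, μ (A m ∆ A n) < ε) :
    ∃ L ∈ S, Tendsto (fun n => μ (A n ∆ L)) atTop (𝓝 0) := by
  have hS := hμ.isSetAlgebra
  obtain ⟨φ, hφ, hφA⟩ := extraction_forall_of_eventually'
    (P := fun k j => ∀ n ≥ j, μ (A j ∆ A n) < (1 / 2) ^ k) fun k =>
    (hcauchy ((1 / 2) ^ k) (by positivity)).imp fun N hN j hj n hn => hN j hj n (hj.trans hn)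
  have hsum : Summable fun k => μ (A (φ k) ∆ A (φ (k + 1))) :=
    summable_geometric_two.of_nonneg_of_le
      (fun k => hμ.nonneg _ (hS.symmDiff_mem (hA _) (hA _)))
      fun k => (hφA k _ (hφ.monotone k.le_succ)).le
  obtain ⟨L, hL, hlim⟩ := h.exists_tendsto_of_summable hμ (fun k => hA (φ k)) hsum
  refine ⟨L, hL, Metric.tendsto_atTop.2 fun ε hε => ?_⟩
  obtain ⟨N, hN⟩ := hcauchy (ε / 2) (half_pos hε)
  obtain ⟨k, hkL, hkN⟩ := ((hlim.eventually (gt_mem_nhds (half_pos hε))).and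
    (hφ.tendsto_atTop.eventually_ge_atTop N)).exists
  refine ⟨N, fun n hn => ?_⟩
  rw [Real.dist_eq, sub_zero, abs_of_nonneg (hμ.nonneg _ (hS.symmDiff_mem (hA n) hL))]
  calc μ (A n ∆ L) ≤ μ (A n ∆ A (φ k)) + μ (A (φ k) ∆ L) :=
        hμ.measure_symmDiff_triangle (hA n) (hA _) hL
    _ < ε / 2 + ε / 2 := add_lt_add (hN n hn _ hkN) hkL
    _ = ε := add_halves ε

end HasMonotoneLimits

end

theorem completeness_characterization_additive_general
    {X : Type*} (S : Set (Set X))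
    (hSne : S.Nonempty)
    (hSunion : ∀ A ∈ S, ∀ B ∈ S, A ∪ B ∈ S)
    (hScompl : ∀ A ∈ S, Aᶜ ∈ S)
    (μ : Set X → ℝ)
    (hμnonneg : ∀ A ∈ S, 0 ≤ μ A)
    (hμadd : ∀ A ∈ S, ∀ B ∈ S, Disjoint A B → μ (A ∪ B) = μ A + μ B)
    (hμbdd : ∃ M : ℝ, ∀ A ∈ S, μ A ≤ M) :
    -- completeness of (S, d_μ)
    (∀ A : ℕ → Set X, (∀ n, A n ∈ S) →
      (∀ ε : ℝ, 0 < ε → ∃ N : ℕ, ∀ m ≥ N, ∀ n ≥ N,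
        min 1 (μ (symmDiff (A m) (A n))) < ε) →
      ∃ L ∈ S, Tendsto (fun n => min 1 (μ (symmDiff (A n) L))) atTop (nhds 0))
    ↔
    -- the AP0 condition
    (∀ A : ℕ → Set X, (∀ n, A n ∈ S) → (∀ m n, m ≤ n → A m ⊆ A n) →
      ∃ L ∈ S, (∀ n, μ (A n \ L) = 0) ∧
        Tendsto (fun n => μ (A n)) atTop (nhds (μ L))) := by
  have hempty : ∅ ∈ S := by
    obtain ⟨A, hA⟩ := hSne
    simpa using hScompl _ (hSunion _ hA _ (hScompl _ hA))
  have hμ : IsAdditiveContent S μ :=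
    ⟨⟨hempty, hScompl, fun _ _ hA hB => hSunion _ hA _ hB⟩, hμnonneg, hμadd⟩
  rw [← hμ.hasMonotoneLimits_iff]
  constructor
  · intro hcomplete A hA hmono
    obtain ⟨L, hL, hlim⟩ :=
      hcomplete A hA (cauchy_min_one_iff.2 (hμ.cauchy_symmDiff_of_monotone hμbdd hA hmono))
    exact ⟨L, hL, tendsto_min_one_iff.1 hlim⟩
  · intro hmono A hA hcauchy
    obtain ⟨L, hL, hlim⟩ := hmono.exists_tendsto_of_cauchy hμ hA (cauchy_min_one_iff.1 hcauchy)
    exact ⟨L, hL, tendsto_min_one_iff.2 hlim⟩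

/-- For a field of subsets `S` of a nonempty set `X` and a nonnegative,
finitely additive, bounded map `μ : S → [0,∞)`, the pseudometric space `(S, d_μ)` is
complete iff for every increasing sequence `(Aₙ)` in `S` there exists `A ∈ S` such that
`μ(Aₙ \ A) = 0` for all `n` and `μ(A) = lim μ(Aₙ)`. -/
theorem completeness_characterization_additive
    {X : Type*} [Nonempty X] (S : Set (Set X))
    (hSne : S.Nonempty)
    (hSunion : ∀ A ∈ S, ∀ B ∈ S, A ∪ B ∈ S)
    (hScompl : ∀ A ∈ S, Aᶜ ∈ S)
    (μ : Set X → ℝ)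
    (hμnonneg : ∀ A ∈ S, 0 ≤ μ A)
    (hμadd : ∀ A ∈ S, ∀ B ∈ S, Disjoint A B → μ (A ∪ B) = μ A + μ B)
    (hμbdd : ∃ M : ℝ, ∀ A ∈ S, μ A ≤ M) :
    -- completeness of (S, d_μ)
    (∀ A : ℕ → Set X, (∀ n, A n ∈ S) →
      (∀ ε : ℝ, 0 < ε → ∃ N : ℕ, ∀ m ≥ N, ∀ n ≥ N,
        min 1 (μ (symmDiff (A m) (A n))) < ε) →
      ∃ L ∈ S, Tendsto (fun n => min 1 (μ (symmDiff (A n) L))) atTop (nhds 0))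
    ↔
    -- the AP0 condition
    (∀ A : ℕ → Set X, (∀ n, A n ∈ S) → (∀ m n, m ≤ n → A m ⊆ A n) →
      ∃ L ∈ S, (∀ n, μ (A n \ L) = 0) ∧
        Tendsto (fun n => μ (A n)) atTop (nhds (μ L))) :=
  completeness_characterization_additive_general S hSne hSunion hScompl μ hμnonneg hμadd hμbdd
end

section
/- Let φ : 𝒫(ℕ) → [0,∞] be a lower semicontinuous submeasure. Then the pseudometric space (𝒫(ℕ), d_{‖·‖_φ}) is complete, where d_{‖·‖_φ}(A,B) := min{1, ‖A △ B‖_φ}. -/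
open Filter Topology
open scoped ENNReal

/-- The `φ`-mass at infinity `‖A‖_φ = lim_n φ(A \ {0,…,n-1})`; since the sequence is
nonincreasing (for monotone `φ`), the limit equals the infimum. -/
noncomputable def exhNorm (φ : Set ℕ → ℝ≥0∞) (A : Set ℕ) : ℝ≥0∞ :=
  ⨅ n : ℕ, φ (A \ Set.Iio n)

section aux

variable {φ : Set ℕ → ℝ≥0∞}

lemma exh_le (φ : Set ℕ → ℝ≥0∞) (A : Set ℕ) (n : ℕ) :
    exhNorm φ A ≤ φ (A \ Set.Iio n) := iInf_le _ n

lemma exh_mono (hφmono : ∀ A B : Set ℕ, A ⊆ B → φ A ≤ φ B) {A B : Set ℕ} (h : A ⊆ B) :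
    exhNorm φ A ≤ exhNorm φ B :=
  iInf_mono fun n => hφmono _ _ (Set.diff_subset_diff_left h)

lemma exh_subadd (hφmono : ∀ A B : Set ℕ, A ⊆ B → φ A ≤ φ B)
    (hφsub : ∀ A B : Set ℕ, φ (A ∪ B) ≤ φ A + φ B) (A B : Set ℕ) :
    exhNorm φ (A ∪ B) ≤ exhNorm φ A + exhNorm φ B := by
  have hant : ∀ (C : Set ℕ) {i j : ℕ}, i ≤ j → φ (C \ Set.Iio j) ≤ φ (C \ Set.Iio i) :=
    fun C i j hij => hφmono _ _ (Set.diff_subset_diff_right (Set.Iio_subset_Iio hij))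
  have key : exhNorm φ A + exhNorm φ B
      = ⨅ n : ℕ, (φ (A \ Set.Iio n) + φ (B \ Set.Iio n)) := by
    refine ENNReal.iInf_add_iInf fun i j => ⟨max i j, ?_⟩
    exact add_le_add (hant A (le_max_left i j)) (hant B (le_max_right i j))
  rw [key]
  refine le_iInf fun n => ?_
  refine le_trans (exh_le φ _ n) (le_trans (hφmono _ _ (le_of_eq (Set.union_diff_distrib))) ?_)
  exact hφsub _ _

lemma exh_tri (hφmono : ∀ A B : Set ℕ, A ⊆ B → φ A ≤ φ B)
    (hφsub : ∀ A B : Set ℕ, φ (A ∪ B) ≤ φ A + φ B) (X Y Z : Set ℕ) :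
    exhNorm φ (symmDiff X Z) ≤ exhNorm φ (symmDiff X Y) + exhNorm φ (symmDiff Y Z) :=
  le_trans (exh_mono hφmono (symmDiff_triangle X Y Z)) (exh_subadd hφmono hφsub _ _)

lemma phi_finset_subadd (hφ0 : φ ∅ = 0)
    (hφsub : ∀ A B : Set ℕ, φ (A ∪ B) ≤ φ A + φ B)
    (s : Finset ℕ) (X : ℕ → Set ℕ) :
    φ (⋃ i ∈ s, X i) ≤ ∑ i ∈ s, φ (X i) := by
  induction s using Finset.induction with
  | empty => simp [hφ0]
  | insert _ _ hnotmem ih =>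
    rw [Finset.set_biUnion_insert, Finset.sum_insert hnotmem]
    exact le_trans (hφsub _ _) (add_le_add le_rfl ih)

lemma phi_countable_subadd (hφ0 : φ ∅ = 0)
    (hφmono : ∀ A B : Set ℕ, A ⊆ B → φ A ≤ φ B)
    (hφsub : ∀ A B : Set ℕ, φ (A ∪ B) ≤ φ A + φ B)
    (hφlsc : ∀ A : Set ℕ, φ A = ⨆ n : ℕ, φ (A ∩ Set.Iio n))
    (X : ℕ → Set ℕ) :
    φ (⋃ i, X i) ≤ ∑' i, φ (X i) := by
  rw [hφlsc]
  refine iSup_le fun n => ?_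
  have hfin : ((⋃ i, X i) ∩ Set.Iio n).Finite :=
    (Set.finite_Iio n).subset Set.inter_subset_right
  have hch : ∀ x : ℕ, x ∈ (⋃ i, X i) ∩ Set.Iio n → ∃ i, x ∈ X i := by
    intro x hx
    exact Set.mem_iUnion.mp hx.1
  choose! f hf using hch
  set T : Finset ℕ := hfin.toFinset.image f with hT
  have hsub : (⋃ i, X i) ∩ Set.Iio n ⊆ ⋃ i ∈ T, X i := by
    intro x hx
    refine Set.mem_biUnion ?_ (hf x hx)
    exact Finset.mem_image_of_mem f (hfin.mem_toFinset.mpr hx)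
  calc φ ((⋃ i, X i) ∩ Set.Iio n) ≤ φ (⋃ i ∈ T, X i) := hφmono _ _ hsub
    _ ≤ ∑ i ∈ T, φ (X i) := phi_finset_subadd hφ0 hφsub T X
    _ ≤ ∑' i, φ (X i) := ENNReal.sum_le_tsum T

end aux

/-- For every lower semicontinuous submeasure `φ : 𝒫(ℕ) → [0,∞]`, the
pseudometric space `(𝒫(ℕ), d_{‖·‖_φ})` is complete. -/
theorem completeness_exhNorm_lscsm
    (φ : Set ℕ → ℝ≥0∞)
    (hφ0 : φ ∅ = 0)
    (hφmono : ∀ A B : Set ℕ, A ⊆ B → φ A ≤ φ B)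
    (hφsub : ∀ A B : Set ℕ, φ (A ∪ B) ≤ φ A + φ B)
    (hφfin : ∀ F : Set ℕ, F.Finite → φ F ≠ ⊤)
    (hφlsc : ∀ A : Set ℕ, φ A = ⨆ n : ℕ, φ (A ∩ Set.Iio n)) :
    ∀ A : ℕ → Set ℕ,
      (∀ ε : ℝ≥0∞, 0 < ε → ∃ N : ℕ, ∀ m ≥ N, ∀ n ≥ N,
        min 1 (exhNorm φ (symmDiff (A m) (A n))) < ε) →
      ∃ L : Set ℕ,
        Tendsto (fun n => min 1 (exhNorm φ (symmDiff (A n) L))) atTop (nhds 0) := by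
  intro A hC
  classical
  -- Step 1: extract a rapidly Cauchy subsequence
  have hpow_pos : ∀ k : ℕ, (0 : ℝ≥0∞) < (2⁻¹ : ℝ≥0∞) ^ k :=
    fun k => ENNReal.pow_pos (ENNReal.inv_pos.mpr ENNReal.ofNat_ne_top) k
  have hpow_le_one : ∀ k : ℕ, ((2⁻¹ : ℝ≥0∞)) ^ k ≤ 1 :=
    fun k => pow_le_one' (ENNReal.inv_le_one.mpr one_le_two) k
  have hC' : ∀ k : ℕ, ∃ N : ℕ, ∀ p ≥ N, ∀ q ≥ N,
      exhNorm φ (symmDiff (A p) (A q)) < (2⁻¹ : ℝ≥0∞) ^ (k + 1) := by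
    intro k
    obtain ⟨N, hN⟩ := hC ((2⁻¹ : ℝ≥0∞) ^ (k + 1)) (hpow_pos (k + 1))
    refine ⟨N, fun p hp q hq => ?_⟩
    rcases min_lt_iff.mp (hN p hp q hq) with h | h
    · exact absurd h (not_lt.mpr (hpow_le_one (k + 1)))
    · exact h
  choose N hN using hC'
  set ns : ℕ → ℕ := fun k => (Finset.range (k + 1)).sup N with hns
  have hns_ge : ∀ j k : ℕ, j ≤ k → N j ≤ ns k := fun j k h =>
    Finset.le_sup (Finset.mem_range.mpr (Nat.lt_succ_of_le h))
  set B : ℕ → Set ℕ := fun k => A (ns k) with hBdef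
  have hBB : ∀ k, exhNorm φ (symmDiff (B k) (B (k + 1))) < (2⁻¹ : ℝ≥0∞) ^ (k + 1) :=
    fun k => hN k (ns k) (hns_ge k k le_rfl) (ns (k + 1)) (hns_ge k (k + 1) (Nat.le_succ k))
  have hAB : ∀ k : ℕ, ∀ p ≥ N k, ∀ j ≥ k,
      exhNorm φ (symmDiff (A p) (B j)) < (2⁻¹ : ℝ≥0∞) ^ (k + 1) :=
    fun k p hp j hj => hN k p hp (ns j) (hns_ge k j hj)
  -- Step 2: choose cut points m
  have hm'ex : ∀ k, ∃ n : ℕ,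
      φ (symmDiff (B k) (B (k + 1)) \ Set.Iio n) < (2⁻¹ : ℝ≥0∞) ^ (k + 1) := by
    intro k
    exact iInf_lt_iff.mp (hBB k)
  choose m' hm' using hm'ex
  set m : ℕ → ℕ := fun k => Nat.rec (m' 0) (fun k mk => max (mk + 1) (m' (k + 1))) k with hmdef
  have hm_succ : ∀ k, m (k + 1) = max (m k + 1) (m' (k + 1)) := fun k => rfl
  have hm_lt : ∀ k, m k < m (k + 1) := fun k => by
    rw [hm_succ]; exact lt_of_lt_of_le (Nat.lt_succ_self _) (le_max_left _ _)
  have hm_mono : StrictMono m := strictMono_nat_of_lt_succ hm_lt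
  have hm_ge : ∀ k, m' k ≤ m k := by
    intro k
    cases k with
    | zero => exact le_rfl
    | succ k => rw [hm_succ]; exact le_max_right _ _
  have hφm : ∀ k, φ (symmDiff (B k) (B (k + 1)) \ Set.Iio (m k)) < (2⁻¹ : ℝ≥0∞) ^ (k + 1) :=
    fun k => lt_of_le_of_lt
      (hφmono _ _ (Set.diff_subset_diff_right (Set.Iio_subset_Iio (hm_ge k)))) (hm' k)
  -- Step 3: the limit set
  set L : Set ℕ := ⋃ k, B k ∩ (Set.Iio (m (k + 1)) \ Set.Iio (m k)) with hLdef
  -- locating points beyond m j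
  have hloc : ∀ j x : ℕ, m j ≤ x → ∃ k, j ≤ k ∧ m k ≤ x ∧ x < m (k + 1) := by
    intro j x hx
    have hex : ∃ t, x < m t :=
      ⟨x + 1, lt_of_lt_of_le (Nat.lt_succ_self x) hm_mono.le_apply⟩
    have hKx : x < m (Nat.find hex) := Nat.find_spec hex
    have hK0 : Nat.find hex ≠ 0 := by
      intro h0
      rw [h0] at hKx
      exact absurd (le_trans (hm_mono.monotone (Nat.zero_le j)) hx) (not_le.mpr hKx)
    obtain ⟨k, hk⟩ := Nat.exists_eq_succ_of_ne_zero hK0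
    rw [hk] at hKx
    have hkx : m k ≤ x := not_lt.mp (Nat.find_min hex (hk ▸ Nat.lt_succ_self k))
    refine ⟨k, ?_, hkx, hKx⟩
    by_contra h
    push_neg at h
    exact absurd hx (not_le.mpr (lt_of_lt_of_le hKx (hm_mono.monotone (Nat.succ_le_of_lt h))))
  -- membership criterion for L on the interval [m k, m (k+1))
  have hLmem : ∀ k x : ℕ, m k ≤ x → x < m (k + 1) → (x ∈ L ↔ x ∈ B k) := by
    intro k x h1 h2
    constructor
    · intro hx
      obtain ⟨k', hxB, hxI⟩ := Set.mem_iUnion.mp hx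
      obtain ⟨hxlt, hxge⟩ := hxI
      have hxge' : m k' ≤ x := not_lt.mp hxge
      have hxlt' : x < m (k' + 1) := hxlt
      have hkk : k = k' := by
        rcases Nat.lt_trichotomy k k' with h | h | h
        · exact absurd (lt_of_lt_of_le h2 (le_trans (hm_mono.monotone (Nat.succ_le_of_lt h)) hxge'))
            (lt_irrefl x)
        · exact h
        · exact absurd (lt_of_lt_of_le hxlt' (le_trans (hm_mono.monotone (Nat.succ_le_of_lt h)) h1))
            (lt_irrefl x)
      rw [hkk]; exact hxB
    · intro hx
      exact Set.mem_iUnion.mpr ⟨k, hx, ⟨h2, not_lt.mpr h1⟩⟩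
  -- telescoping
  have htel : ∀ k j : ℕ, j ≤ k → ∀ x, x ∈ symmDiff (B j) (B k) →
      ∃ i, j ≤ i ∧ i < k ∧ x ∈ symmDiff (B i) (B (i + 1)) := by
    intro k
    induction k with
    | zero =>
      intro j hj x hx
      interval_cases j
      simp [symmDiff_self] at hx
    | succ k ih =>
      intro j hj x hx
      rcases Nat.eq_or_lt_of_le hj with rfl | hjk
      · simp [symmDiff_self] at hx
      · have hjk' : j ≤ k := Nat.lt_succ_iff.mp hjk
        have hx' : x ∈ symmDiff (B j) (B k) ∪ symmDiff (B k) (B (k + 1)) :=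
          symmDiff_triangle (B j) (B k) (B (k + 1)) hx
        rcases hx' with h | h
        · obtain ⟨i, h1, h2, h3⟩ := ih j hjk' x h
          exact ⟨i, h1, Nat.lt_succ_of_lt h2, h3⟩
        · exact ⟨k, hjk', Nat.lt_succ_self k, h⟩
  -- key inclusion
  have hkey : ∀ j : ℕ, (symmDiff (B j) L) \ Set.Iio (m j) ⊆
      ⋃ i : ℕ, (symmDiff (B (j + i)) (B (j + i + 1)) \ Set.Iio (m (j + i))) := by
    intro j x hx
    obtain ⟨hxs, hxI⟩ := hx
    obtain ⟨k, hjk, h1, h2⟩ := hloc j x (not_lt.mp hxI)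
    have hxk : x ∈ symmDiff (B j) (B k) := by
      rcases Set.mem_symmDiff.mp hxs with ⟨hj1, hL1⟩ | ⟨hL1, hj1⟩
      · exact Set.mem_symmDiff.mpr (Or.inl ⟨hj1, fun hk => hL1 ((hLmem k x h1 h2).mpr hk)⟩)
      · exact Set.mem_symmDiff.mpr (Or.inr ⟨(hLmem k x h1 h2).mp hL1, hj1⟩)
    obtain ⟨i, hji, hik, hxi⟩ := htel k j hjk x hxk
    have hij : j + (i - j) = i := by omega
    refine Set.mem_iUnion.mpr ⟨i - j, ?_⟩
    rw [hij]
    refine ⟨hxi, ?_⟩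
    have hmi : m (i + 1) ≤ m k := hm_mono.monotone (Nat.succ_le_of_lt hik)
    exact not_lt.mpr (le_trans (le_of_lt (hm_lt i)) (le_trans hmi h1))
  -- geometric bound on tails
  have hgeo : ∀ j : ℕ, ∑' i : ℕ, (2⁻¹ : ℝ≥0∞) ^ (j + i + 1) = (2⁻¹ : ℝ≥0∞) ^ j := by
    intro j
    have h1 : ∀ i : ℕ, (2⁻¹ : ℝ≥0∞) ^ (j + i + 1) = (2⁻¹ : ℝ≥0∞) ^ (j + 1) * (2⁻¹) ^ i := by
      intro i
      rw [← pow_add]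
      congr 1
      omega
    calc ∑' i : ℕ, (2⁻¹ : ℝ≥0∞) ^ (j + i + 1)
        = ∑' i : ℕ, (2⁻¹ : ℝ≥0∞) ^ (j + 1) * (2⁻¹) ^ i := tsum_congr h1
      _ = (2⁻¹ : ℝ≥0∞) ^ (j + 1) * ∑' i : ℕ, (2⁻¹ : ℝ≥0∞) ^ i := ENNReal.tsum_mul_left
      _ = (2⁻¹ : ℝ≥0∞) ^ (j + 1) * 2 := by
          rw [ENNReal.tsum_geometric, ENNReal.one_sub_inv_two, inv_inv]
      _ = (2⁻¹ : ℝ≥0∞) ^ j * (2⁻¹ * 2) := by rw [pow_succ, mul_assoc]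
      _ = (2⁻¹ : ℝ≥0∞) ^ j := by
          rw [ENNReal.inv_mul_cancel two_ne_zero ENNReal.ofNat_ne_top, mul_one]
  -- bound on exhNorm (B j ∆ L)
  have hBL : ∀ j : ℕ, exhNorm φ (symmDiff (B j) L) ≤ (2⁻¹ : ℝ≥0∞) ^ j := by
    intro j
    refine le_trans (exh_le φ _ (m j)) (le_trans (hφmono _ _ (hkey j)) ?_)
    refine le_trans (phi_countable_subadd hφ0 hφmono hφsub hφlsc _) ?_
    refine le_trans (ENNReal.tsum_le_tsum fun i => (hφm (j + i)).le) (le_of_eq (hgeo j))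
  -- conclusion
  refine ⟨L, ENNReal.tendsto_nhds_zero.mpr fun δ hδ => ?_⟩
  obtain ⟨k, hk⟩ := ENNReal.exists_inv_two_pow_lt (ne_of_gt hδ)
  refine eventually_atTop.mpr ⟨N (k + 1), fun n hn => ?_⟩
  have h1 : exhNorm φ (symmDiff (A n) (B (k + 1))) < (2⁻¹ : ℝ≥0∞) ^ (k + 2) :=
    hAB (k + 1) n hn (k + 1) le_rfl
  have h2 : exhNorm φ (symmDiff (A n) L) ≤ (2⁻¹ : ℝ≥0∞) ^ k := by
    refine le_trans (exh_tri hφmono hφsub (A n) (B (k + 1)) L) ?_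
    have := add_le_add
      (le_trans h1.le (pow_le_pow_right_of_le_one'
        (ENNReal.inv_le_one.mpr one_le_two) (by omega : k + 1 ≤ k + 2)))
      (hBL (k + 1))
    refine le_trans this (le_of_eq ?_)
    rw [pow_succ, ← mul_add, ENNReal.inv_two_add_inv_two, mul_one]
  exact le_trans (min_le_right _ _) (le_trans h2 hk.le)
end

section
/- Let μ* : 𝒫(ℕ) → ℝ be an upper density on ℕ such that bd*(A) ≤ μ*(A) for all A ⊆ ℕ, where bd* is the upper Banach density. Then the pseudometric space (𝒫(ℕ), d_{μ*}) is not complete: there exists a d_{μ*}-Cauchy sequence of subsets of ℕ that does not d_{μ*}-converge to any subset of ℕ. -/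
open Filter Topology

/-- The upper Banach density `bd*(A) = lim_n max_k |A ∩ [k, k+n)| / n`, which exists and
equals `inf_{n ≥ 1} sup_k |A ∩ [k, k+n)| / n`. -/
noncomputable def upperBanachDensity (A : Set ℕ) : ℝ :=
  ⨅ n : ℕ, ⨆ k : ℕ, ((A ∩ Set.Ico k (k + (n + 1))).ncard : ℝ) / (n + 1)

namespace NotCompleteAux

/-- Grid level `j`: in every period of length `4^(j+1)`, the interval of length `2^(j+1)`
starting at offset `2^(2j+1)` (the middle of the period). -/
def G (j : ℕ) : Set ℕ :=
  {m | 2 ^ (2*j+1) ≤ m % 4 ^ (j+1) ∧ m % 4 ^ (j+1) < 2 ^ (2*j+1) + 2 ^ (j+1)}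

/-- The Cauchy sequence: `D i = ⋃_{j ≥ i} G j`. -/
def D (i : ℕ) : Set ℕ := {m | ∃ j, i ≤ j ∧ m ∈ G j}

lemma four_pow (j : ℕ) : (4:ℕ) ^ (j+1) = 2 ^ (2*j+1) + 2 ^ (2*j+1) := by
  have : (4:ℕ) ^ (j+1) = 2 ^ (2*(j+1)) := by
    rw [show (4:ℕ) = 2^2 by norm_num, ← pow_mul]
  rw [this, show 2*(j+1) = (2*j+1)+1 by ring, pow_succ]
  ring

lemma HW_le_P (j : ℕ) : 2 ^ (2*j+1) + 2 ^ (j+1) ≤ 4 ^ (j+1) := by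
  rw [four_pow]
  exact Nat.add_le_add_left (Nat.pow_le_pow_right (by norm_num) (by omega)) _

lemma D_antitone {i i' : ℕ} (h : i ≤ i') : D i' ⊆ D i := by
  rintro m ⟨j, hj, hm⟩; exact ⟨j, h.trans hj, hm⟩

lemma G_subset_D {i j : ℕ} (h : i ≤ j) : G j ⊆ D i := fun m hm => ⟨j, h, hm⟩

/-- finiteness of window intersections -/
lemma fin_inter (S : Set ℕ) (a b : ℕ) : (S ∩ Set.Ico a b).Finite :=
  (Set.finite_Ico a b).inter_of_right S

lemma ncard_Ico (a b : ℕ) : (Set.Ico a b).ncard = b - a := by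
  rw [show (Set.Ico a b) = ↑(Finset.Ico a b) by simp, Set.ncard_coe_finset, Nat.card_Ico]

/-- splitting a long window into consecutive windows -/
lemma ncard_split (S : Set ℕ) (a N : ℕ) :
    ∀ q : ℕ, (S ∩ Set.Ico a (a + q*N)).ncard ≤
      ∑ t ∈ Finset.range q, (S ∩ Set.Ico (a + t*N) (a + t*N + N)).ncard := by
  intro q
  induction q with
  | zero => simp
  | succ q ih =>
      have hsplit : Set.Ico a (a + (q+1)*N) =
          Set.Ico a (a + q*N) ∪ Set.Ico (a + q*N) (a + q*N + N) := by
        rw [Set.Ico_union_Ico_eq_Ico (by omega) (by omega)]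
        congr 1; ring
      rw [hsplit, Set.inter_union_distrib_left, Finset.sum_range_succ]
      exact (Set.ncard_union_le _ _).trans (by gcongr)

/-- disjoint intervals, one per period, lower bound -/
lemma ncard_gather (Lset : Set ℕ) (P H W : ℕ) (hHW : H + W ≤ P) :
    ∀ Q : ℕ, ∑ q ∈ Finset.range Q, (Lset ∩ Set.Ico (q*P + H) (q*P + H + W)).ncard ≤
      (Lset ∩ Set.Ico 0 (Q*P)).ncard := by
  intro Q
  induction Q with
  | zero => simp
  | succ Q ih =>
      rw [Finset.sum_range_succ]
      have hdisj : Disjoint (Lset ∩ Set.Ico 0 (Q*P))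
          (Lset ∩ Set.Ico (Q*P + H) (Q*P + H + W)) := by
        rw [Set.disjoint_left]
        rintro x ⟨-, -, hx2⟩ ⟨-, hx3, -⟩
        omega
      have hun : (Lset ∩ Set.Ico 0 (Q*P)) ∪ (Lset ∩ Set.Ico (Q*P + H) (Q*P + H + W))
          ⊆ Lset ∩ Set.Ico 0 ((Q+1)*P) := by
        rintro x (⟨hx1, -, hx2⟩ | ⟨hx1, hx2, hx3⟩) <;>
          exact ⟨hx1, Nat.zero_le _, by nlinarith⟩
      calc ∑ q ∈ Finset.range Q, (Lset ∩ Set.Ico (q*P + H) (q*P + H + W)).ncard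
            + (Lset ∩ Set.Ico (Q*P + H) (Q*P + H + W)).ncard
          ≤ (Lset ∩ Set.Ico 0 (Q*P)).ncard
            + (Lset ∩ Set.Ico (Q*P + H) (Q*P + H + W)).ncard := by gcongr
        _ = ((Lset ∩ Set.Ico 0 (Q*P)) ∪ (Lset ∩ Set.Ico (Q*P + H) (Q*P + H + W))).ncard := by
            rw [Set.ncard_union_eq hdisj (fin_inter _ _ _) (fin_inter _ _ _)]
        _ ≤ (Lset ∩ Set.Ico 0 ((Q+1)*P)).ncard :=
            Set.ncard_le_ncard hun (fin_inter _ _ _)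

/-- ncard of a finite union over a finset -/
lemma ncard_biUnion_le {ι : Type} [DecidableEq ι] (s : Finset ι) (f : ι → Set ℕ) :
    (⋃ i ∈ s, f i).ncard ≤ ∑ i ∈ s, (f i).ncard := by
  induction s using Finset.induction_on with
  | empty => simp
  | @insert a s ha ih =>
      rw [Finset.set_biUnion_insert, Finset.sum_insert ha]
      exact (Set.ncard_union_le _ _).trans (by gcongr)

section Mu
variable {μs : Set ℕ → ℝ}

lemma mu_empty (hF4 : ∀ (A : Set ℕ) (k : ℕ), k ≠ 0 → μs ((fun a => k * a) '' A) = μs A / k) :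
    μs ∅ = 0 := by
  have h := hF4 ∅ 2 (by norm_num)
  rw [Set.image_empty] at h
  push_cast at h
  linarith [h]

lemma mu_class (hF1 : μs Set.univ = 1)
    (hF4 : ∀ (A : Set ℕ) (k : ℕ), k ≠ 0 → μs ((fun a => k * a) '' A) = μs A / k)
    (hF5 : ∀ (A : Set ℕ) (h : ℕ), μs ((fun a => a + h) '' A) = μs A)
    (P c : ℕ) (hP : P ≠ 0) (hc : c < P) :
    μs {m : ℕ | m % P = c} = 1 / (P : ℝ) := by
  have hcomp : (fun a => a + c) '' ((fun a => P * a) '' (Set.univ : Set ℕ))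
      = (fun a : ℕ => P * a + c) '' Set.univ := by
    rw [← Set.image_comp]; rfl
  have hset : {m : ℕ | m % P = c} = (fun a : ℕ => P * a + c) '' Set.univ := by
    ext m
    rw [Set.image_univ]
    simp only [Set.mem_setOf_eq, Set.mem_range]
    constructor
    · intro hm
      exact ⟨m / P, by rw [← hm]; exact Nat.div_add_mod m P⟩
    · rintro ⟨a, rfl⟩
      rw [Nat.mul_add_mod, Nat.mod_eq_of_lt hc]
  rw [hset, ← hcomp, hF5, hF4 _ P hP, hF1]

lemma mu_biUnion_le
    (hF3 : ∀ A B : Set ℕ, μs (A ∪ B) ≤ μs A + μs B)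
    (hF4 : ∀ (A : Set ℕ) (k : ℕ), k ≠ 0 → μs ((fun a => k * a) '' A) = μs A / k)
    {ι : Type} [DecidableEq ι] (s : Finset ι) (f : ι → Set ℕ) :
    μs (⋃ i ∈ s, f i) ≤ ∑ i ∈ s, μs (f i) := by
  induction s using Finset.induction_on with
  | empty => simp [mu_empty hF4]
  | @insert a s ha ih =>
      rw [Finset.set_biUnion_insert, Finset.sum_insert ha]
      exact (hF3 _ _).trans (by gcongr)

lemma WdivP (j : ℕ) : ((2:ℝ)^(j+1)) / ((4:ℝ)^(j+1)) = ((2:ℝ)⁻¹)^(j+1) := by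
  have h4 : (4:ℝ)^(j+1) = (2:ℝ)^(j+1) * (2:ℝ)^(j+1) := by
    rw [show (4:ℝ) = 2*2 by norm_num, mul_pow]
  have h2 : (0:ℝ) < (2:ℝ)^(j+1) := by positivity
  rw [h4, inv_pow]
  field_simp

lemma mu_G_le (hF1 : μs Set.univ = 1)
    (hF2 : ∀ A B : Set ℕ, A ⊆ B → μs A ≤ μs B)
    (hF3 : ∀ A B : Set ℕ, μs (A ∪ B) ≤ μs A + μs B)
    (hF4 : ∀ (A : Set ℕ) (k : ℕ), k ≠ 0 → μs ((fun a => k * a) '' A) = μs A / k)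
    (hF5 : ∀ (A : Set ℕ) (h : ℕ), μs ((fun a => a + h) '' A) = μs A)
    (j : ℕ) : μs (G j) ≤ ((2:ℝ)⁻¹)^(j+1) := by
  have hsub : G j ⊆ ⋃ r ∈ Finset.range (2^(j+1)), {m : ℕ | m % 4^(j+1) = 2^(2*j+1) + r} := by
    intro m hm
    obtain ⟨h1, h2⟩ := hm
    refine Set.mem_biUnion (Finset.mem_range.2 (show m % 4^(j+1) - 2^(2*j+1) < 2^(j+1) by omega)) ?_
    simp only [Set.mem_setOf_eq]
    omega
  refine (hF2 _ _ hsub).trans ?_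
  refine (mu_biUnion_le hF3 hF4 _ _).trans ?_
  have hval : ∀ r ∈ Finset.range (2^(j+1)),
      μs {m : ℕ | m % 4^(j+1) = 2^(2*j+1) + r} = 1 / ((4:ℝ)^(j+1)) := by
    intro r hr
    rw [mu_class hF1 hF4 hF5 _ _ (by positivity)
      (by have := HW_le_P j; have := Finset.mem_range.1 hr; omega)]
    push_cast
    ring
  rw [Finset.sum_congr rfl hval, Finset.sum_const, Finset.card_range, nsmul_eq_mul]
  push_cast
  rw [← WdivP j]
  exact le_of_eq (by ring)

lemma sum_halves : ∀ {n m : ℕ}, n ≤ m →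
    ∑ j ∈ Finset.Ico n m, ((2:ℝ)⁻¹)^(j+1) = ((2:ℝ)⁻¹)^n - ((2:ℝ)⁻¹)^m := by
  intro n m h
  induction m, h using Nat.le_induction with
  | base => simp
  | succ m hm ih =>
      rw [Finset.sum_Ico_succ_top hm, ih, pow_succ]
      ring

lemma sum_halves_le (n m : ℕ) :
    ∑ j ∈ Finset.Ico n m, ((2:ℝ)⁻¹)^(j+1) ≤ ((2:ℝ)⁻¹)^n := by
  rcases le_total n m with h | h
  · rw [sum_halves h]
    have : (0:ℝ) ≤ ((2:ℝ)⁻¹)^m := by positivity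
    linarith
  · rw [Finset.Ico_eq_empty (by omega)]
    simp only [Finset.sum_empty]
    positivity

lemma symm_subset {n m : ℕ} (h : n ≤ m) :
    symmDiff (D m) (D n) ⊆ ⋃ j ∈ Finset.Ico n m, G j := by
  intro x hx
  rw [Set.mem_symmDiff] at hx
  rcases hx with ⟨hx1, hx2⟩ | ⟨hx1, hx2⟩
  · exact absurd (D_antitone h hx1) hx2
  · obtain ⟨j, hj, hG⟩ := hx1
    have hjm : j < m := by
      by_contra hcon
      exact hx2 ⟨j, by omega, hG⟩
    exact Set.mem_biUnion (Finset.mem_Ico.2 ⟨hj, hjm⟩) hG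

lemma mu_cauchy (hF1 : μs Set.univ = 1)
    (hF2 : ∀ A B : Set ℕ, A ⊆ B → μs A ≤ μs B)
    (hF3 : ∀ A B : Set ℕ, μs (A ∪ B) ≤ μs A + μs B)
    (hF4 : ∀ (A : Set ℕ) (k : ℕ), k ≠ 0 → μs ((fun a => k * a) '' A) = μs A / k)
    (hF5 : ∀ (A : Set ℕ) (h : ℕ), μs ((fun a => a + h) '' A) = μs A)
    {n m : ℕ} (h : n ≤ m) :
    μs (symmDiff (D m) (D n)) ≤ ((2:ℝ)⁻¹)^n := by
  refine (hF2 _ _ (symm_subset h)).trans ?_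
  refine (mu_biUnion_le hF3 hF4 _ _).trans ?_
  refine (Finset.sum_le_sum fun j _ => mu_G_le hF1 hF2 hF3 hF4 hF5 j).trans ?_
  exact sum_halves_le n m

end Mu

lemma bdd_windows (S : Set ℕ) (n : ℕ) :
    BddAbove (Set.range fun k => ((S ∩ Set.Ico k (k + (n+1))).ncard : ℝ) / ((n:ℝ)+1)) := by
  refine ⟨1, ?_⟩
  rintro x ⟨k, rfl⟩
  have hcount : ((S ∩ Set.Ico k (k + (n+1))).ncard : ℝ) ≤ (n:ℝ)+1 := by
    have h1 : (S ∩ Set.Ico k (k + (n+1))).ncard ≤ (Set.Ico k (k + (n+1))).ncard :=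
      Set.ncard_le_ncard Set.inter_subset_right (Set.finite_Ico _ _)
    rw [ncard_Ico] at h1
    have : (S ∩ Set.Ico k (k + (n+1))).ncard ≤ n+1 := by omega
    exact_mod_cast this
  have hpos : (0:ℝ) < (n:ℝ)+1 := by positivity
  rw [div_le_one hpos]
  exact hcount

lemma window_lt_of_bd_lt {S : Set ℕ} {ε : ℝ} (h : upperBanachDensity S < ε) :
    ∃ N₀ : ℕ, 0 < N₀ ∧ ∀ k, ((S ∩ Set.Ico k (k + N₀)).ncard : ℝ) < ε * N₀ := by
  obtain ⟨n₀, hn₀⟩ := exists_lt_of_ciInf_lt h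
  refine ⟨n₀ + 1, Nat.succ_pos _, fun k => ?_⟩
  have hle : ((S ∩ Set.Ico k (k + (n₀+1))).ncard : ℝ) / ((n₀:ℝ)+1)
      ≤ ⨆ k : ℕ, ((S ∩ Set.Ico k (k + (n₀ + 1))).ncard : ℝ) / ((n₀:ℝ)+1) :=
    le_ciSup (bdd_windows S n₀) k
  have hpos : (0:ℝ) < (n₀:ℝ)+1 := by positivity
  have hlt : ((S ∩ Set.Ico k (k + (n₀+1))).ncard : ℝ) / ((n₀:ℝ)+1) < ε := by
    refine hle.trans_lt ?_
    convert hn₀ using 2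
  rw [div_lt_iff₀ hpos] at hlt
  have : ((n₀:ℝ)+1) = ((n₀+1 : ℕ) : ℝ) := by push_cast; ring
  rw [this] at hlt
  exact hlt

lemma bd_ge {S : Set ℕ} {c : ℝ}
    (h : ∀ n : ℕ, ∃ k, c * ((n:ℝ)+1) ≤ ((S ∩ Set.Ico k (k + (n+1))).ncard : ℝ)) :
    c ≤ upperBanachDensity S := by
  refine le_ciInf fun n => ?_
  obtain ⟨k, hk⟩ := h n
  have hpos : (0:ℝ) < (n:ℝ)+1 := by positivity
  have h1 : c ≤ ((S ∩ Set.Ico k (k + (n+1))).ncard : ℝ) / ((n:ℝ)+1) := by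
    rw [le_div_iff₀ hpos]
    exact hk
  exact h1.trans (le_ciSup (bdd_windows S n) k)

lemma Ico_subset_G (Λ q : ℕ) :
    Set.Ico (q*4^(Λ+1) + 2^(2*Λ+1)) (q*4^(Λ+1) + 2^(2*Λ+1) + 2^(Λ+1)) ⊆ G Λ := by
  have hHWP := HW_le_P Λ
  have hHpos : 0 < 2^(2*Λ+1) := by positivity
  unfold G
  generalize hP : (4:ℕ)^(Λ+1) = P at *
  generalize hH : (2:ℕ)^(2*Λ+1) = H at *
  generalize hW : (2:ℕ)^(Λ+1) = W at *
  rintro m ⟨h1, h2⟩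
  simp only [Set.mem_setOf_eq]
  have hqm : q*P ≤ m := le_trans (Nat.le_add_right _ _) h1
  have hmod : m % P = m - q*P := by
    conv_lhs => rw [show m = (m - q*P) + q*P from by omega]
    rw [Nat.add_mul_mod_self_right, Nat.mod_eq_of_lt (by omega)]
  rw [hmod]
  omega

lemma cover (L : Set ℕ) (i₀ N₀ Λ : ℕ) (hiΛ : i₀ ≤ Λ) (hN₀pos : 0 < N₀)
    (hN₀W : N₀ ≤ 2^(Λ+1))
    (hwin : ∀ k, (((symmDiff (D i₀) L) ∩ Set.Ico k (k + N₀)).ncard : ℝ) < (1/8) * N₀) :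
    ∀ q : ℕ, ((Set.Ico (q*4^(Λ+1) + 2^(2*Λ+1)) (q*4^(Λ+1) + 2^(2*Λ+1) + 2^(Λ+1)) \ L).ncard : ℝ)
      ≤ ((2^(Λ+1) : ℕ) : ℝ)/4 := by
  intro q
  set p := q*4^(Λ+1) + 2^(2*Λ+1) with hp
  have hsubD : Set.Ico p (p + 2^(Λ+1)) ⊆ D i₀ :=
    fun x hx => G_subset_D hiΛ (Ico_subset_G Λ q hx)
  set T := 2^(Λ+1) / N₀ with hT
  have hTW : T * N₀ ≤ 2^(Λ+1) := Nat.div_mul_le_self _ _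
  have hWT : 2^(Λ+1) ≤ (T+1) * N₀ := by
    have h1 := Nat.div_add_mod (2^(Λ+1)) N₀
    have h2 := Nat.mod_lt (2^(Λ+1)) hN₀pos
    calc (2:ℕ)^(Λ+1) = N₀ * T + 2^(Λ+1) % N₀ := by rw [hT, h1]
      _ ≤ N₀ * T + N₀ := by omega
      _ = (T+1) * N₀ := by ring
  have hsub2 : (Set.Ico p (p + 2^(Λ+1)) \ L)
      ⊆ (symmDiff (D i₀) L) ∩ Set.Ico p (p + (T+1)*N₀) := by
    rintro x ⟨hx1, hx2⟩
    refine ⟨?_, hx1.1, lt_of_lt_of_le hx1.2 (Nat.add_le_add_left hWT p)⟩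
    rw [Set.mem_symmDiff]
    exact Or.inl ⟨hsubD hx1, hx2⟩
  have h3 : (Set.Ico p (p + 2^(Λ+1)) \ L).ncard
      ≤ ∑ t ∈ Finset.range (T+1),
        ((symmDiff (D i₀) L) ∩ Set.Ico (p + t*N₀) (p + t*N₀ + N₀)).ncard :=
    (Set.ncard_le_ncard hsub2 (fin_inter _ _ _)).trans (ncard_split _ p N₀ (T+1))
  have h4 : ((Set.Ico p (p + 2^(Λ+1)) \ L).ncard : ℝ)
      ≤ ∑ t ∈ Finset.range (T+1), (((symmDiff (D i₀) L)
          ∩ Set.Ico (p + t*N₀) (p + t*N₀ + N₀)).ncard : ℝ) := by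
    exact_mod_cast h3
  have h5 : ∑ t ∈ Finset.range (T+1), (((symmDiff (D i₀) L)
          ∩ Set.Ico (p + t*N₀) (p + t*N₀ + N₀)).ncard : ℝ)
      ≤ ∑ _t ∈ Finset.range (T+1), (1/8) * (N₀:ℝ) :=
    Finset.sum_le_sum fun t _ => le_of_lt (hwin _)
  have h6 : ∑ _t ∈ Finset.range (T+1), (1/8) * (N₀:ℝ) = (((T+1) * N₀ : ℕ) : ℝ) * (1/8) := by
    rw [Finset.sum_const, Finset.card_range, nsmul_eq_mul]
    push_cast; ring
  have hc1 : (T+1) * N₀ ≤ 2 * 2^(Λ+1) := by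
    have he : (T+1)*N₀ = T*N₀ + N₀ := by ring
    omega
  have h7 : (((T+1) * N₀ : ℕ) : ℝ) * (1/8) ≤ ((2^(Λ+1) : ℕ) : ℝ)/4 := by
    have hc2 : (((T+1) * N₀ : ℕ) : ℝ) ≤ ((2 * 2^(Λ+1) : ℕ) : ℝ) := by exact_mod_cast hc1
    have hc3 : ((2 * 2^(Λ+1) : ℕ) : ℝ) = 2 * ((2^(Λ+1) : ℕ) : ℝ) := by push_cast; ring
    rw [hc3] at hc2
    linarith
  linarith

lemma G_count (j N : ℕ) : ((G j ∩ Set.Ico 0 N).ncard : ℝ) ≤ 3*(N:ℝ)*((2:ℝ)⁻¹)^(j+1) := by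
  have hfp := four_pow j
  by_cases hN : N ≤ 2^(2*j+1)
  · have hempty : G j ∩ Set.Ico 0 N = ∅ := by
      rw [Set.eq_empty_iff_forall_notMem]
      rintro x ⟨⟨h1, h2⟩, -, h4⟩
      have hmod : x % 4^(j+1) = x := Nat.mod_eq_of_lt (by omega)
      omega
    rw [hempty]
    simp only [Set.ncard_empty, Nat.cast_zero]
    positivity
  · push_neg at hN
    have hsub : G j ∩ Set.Ico 0 N ⊆ ⋃ q ∈ Finset.range (N / 4^(j+1) + 1),
        Set.Ico (q*4^(j+1) + 2^(2*j+1)) (q*4^(j+1) + 2^(2*j+1) + 2^(j+1)) := by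
      rintro x ⟨⟨h1, h2⟩, -, hxN⟩
      have hx : 4^(j+1) * (x / 4^(j+1)) + x % 4^(j+1) = x := Nat.div_add_mod x (4^(j+1))
      refine Set.mem_biUnion
        (Finset.mem_range.2 (Nat.lt_succ_of_le (Nat.div_le_div_right (le_of_lt hxN)))) ?_
      refine ⟨?_, ?_⟩
      · calc x / 4^(j+1) * 4^(j+1) + 2^(2*j+1)
            ≤ 4^(j+1) * (x / 4^(j+1)) + x % 4^(j+1) := by
              rw [mul_comm]; exact Nat.add_le_add_left h1 _
          _ = x := hx
      · calc x = 4^(j+1) * (x / 4^(j+1)) + x % 4^(j+1) := hx.symm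
          _ < 4^(j+1) * (x / 4^(j+1)) + (2^(2*j+1) + 2^(j+1)) := Nat.add_lt_add_left h2 _
          _ = x / 4^(j+1) * 4^(j+1) + 2^(2*j+1) + 2^(j+1) := by ring
    have hfinU : (⋃ q ∈ Finset.range (N / 4^(j+1) + 1),
        Set.Ico (q*4^(j+1) + 2^(2*j+1)) (q*4^(j+1) + 2^(2*j+1) + 2^(j+1))).Finite :=
      Set.Finite.biUnion (Finset.finite_toSet _) (fun q _ => Set.finite_Ico _ _)
    have hcount : (G j ∩ Set.Ico 0 N).ncard ≤ (N / 4^(j+1) + 1) * 2^(j+1) := by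
      refine (Set.ncard_le_ncard hsub hfinU).trans ?_
      refine (ncard_biUnion_le _ _).trans ?_
      have : ∀ q ∈ Finset.range (N / 4^(j+1) + 1),
          (Set.Ico (q*4^(j+1) + 2^(2*j+1)) (q*4^(j+1) + 2^(2*j+1) + 2^(j+1))).ncard = 2^(j+1) := by
        intro q _
        rw [ncard_Ico, Nat.add_sub_cancel_left]
      rw [Finset.sum_congr rfl this, Finset.sum_const, Finset.card_range, smul_eq_mul]
    have hc1 : ((G j ∩ Set.Ico 0 N).ncard : ℝ) ≤ ((N / 4^(j+1) : ℕ) + 1 : ℝ) * ((2:ℝ)^(j+1)) := by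
      have := hcount
      have hcast : (((N / 4^(j+1) + 1) * 2^(j+1) : ℕ) : ℝ)
          = ((N / 4^(j+1) : ℕ) + 1 : ℝ) * ((2:ℝ)^(j+1)) := by push_cast; ring
      calc ((G j ∩ Set.Ico 0 N).ncard : ℝ) ≤ (((N / 4^(j+1) + 1) * 2^(j+1) : ℕ) : ℝ) := by
            exact_mod_cast this
        _ = _ := hcast
    have hdivle : ((N / 4^(j+1) : ℕ) : ℝ) ≤ (N:ℝ) / ((4:ℝ)^(j+1)) := by
      have h := Nat.cast_div_le (α := ℝ) (m := N) (n := 4^(j+1))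
      push_cast at h
      exact h
    have h4pos : (0:ℝ) < (4:ℝ)^(j+1) := by positivity
    have h2pos : (0:ℝ) < (2:ℝ)^(j+1) := by positivity
    have hc2 : ((N / 4^(j+1) : ℕ) + 1 : ℝ) * ((2:ℝ)^(j+1))
        ≤ (N:ℝ) * ((2:ℝ)⁻¹)^(j+1) + (2:ℝ)^(j+1) := by
      have h1 : ((N / 4^(j+1) : ℕ) + 1 : ℝ) * ((2:ℝ)^(j+1))
          ≤ ((N:ℝ) / ((4:ℝ)^(j+1)) + 1) * ((2:ℝ)^(j+1)) := by
        apply mul_le_mul_of_nonneg_right _ (le_of_lt h2pos)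
        linarith
      have h2 : ((N:ℝ) / ((4:ℝ)^(j+1)) + 1) * ((2:ℝ)^(j+1))
          = (N:ℝ) * (((2:ℝ)^(j+1)) / ((4:ℝ)^(j+1))) + (2:ℝ)^(j+1) := by
        field_simp
      rw [h2, WdivP j] at h1
      exact h1
    have hc3 : (2:ℝ)^(j+1) ≤ 2*(N:ℝ)*((2:ℝ)⁻¹)^(j+1) := by
      have hNr : ((2:ℝ)^(2*j+1)) < (N:ℝ) := by exact_mod_cast hN
      have hsq : (2:ℝ)^(j+1) * (2:ℝ)^(j+1) = 2 * (2:ℝ)^(2*j+1) := by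
        rw [← pow_add]
        rw [show (j+1) + (j+1) = (2*j+1) + 1 by ring, pow_succ]
        ring
      rw [inv_pow, ← div_eq_mul_inv, le_div_iff₀ h2pos]
      nlinarith
    linarith

lemma D_sub (i N : ℕ) : D i ∩ Set.Ico 0 N ⊆ ⋃ j ∈ Finset.Ico i N, (G j ∩ Set.Ico 0 N) := by
  rintro x ⟨⟨j, hij, hG⟩, hx⟩
  have hxN : x < N := hx.2
  have hjN : j < N := by
    by_contra hcon
    push_neg at hcon
    obtain ⟨h1, h2⟩ := hG
    have hp := Nat.lt_two_pow_self (n := 2*j+1)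
    have hfp := four_pow j
    have hmod : x % 4^(j+1) = x := Nat.mod_eq_of_lt (by omega)
    omega
  exact Set.mem_biUnion (Finset.mem_Ico.2 ⟨hij, hjN⟩) ⟨hG, hx⟩

lemma main_window (L : Set ℕ) (Λ : ℕ)
    (hcov : ∀ q : ℕ,
      ((Set.Ico (q*4^(Λ+1) + 2^(2*Λ+1)) (q*4^(Λ+1) + 2^(2*Λ+1) + 2^(Λ+1)) \ L).ncard : ℝ)
        ≤ ((2^(Λ+1) : ℕ) : ℝ)/4) :
    ∀ i, Λ + 6 ≤ i → ∀ N : ℕ, 16 * 4^(Λ+1) ≤ N →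
      (N:ℝ) * ((2:ℝ)⁻¹)^(Λ+2) ≤ (((L \ D i) ∩ Set.Ico 0 N).ncard : ℝ) := by
  intro i hi N hN16
  have hApos : (0:ℝ) < (2:ℝ)^(Λ+1) := by positivity
  set A : ℝ := (2:ℝ)^(Λ+1) with hA
  set Q := N / 4^(Λ+1) with hQ
  have hQP : Q * 4^(Λ+1) ≤ N := Nat.div_mul_le_self _ _
  have hNQ : N < (Q+1) * 4^(Λ+1) := by
    have h1 := Nat.div_add_mod N (4^(Λ+1))
    have h2 : N % 4^(Λ+1) < 4^(Λ+1) := Nat.mod_lt _ (by positivity)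
    calc N = 4^(Λ+1) * Q + N % 4^(Λ+1) := by rw [hQ, h1]
      _ < 4^(Λ+1) * Q + 4^(Λ+1) := Nat.add_lt_add_left h2 _
      _ = (Q+1) * 4^(Λ+1) := by ring
  -- each grid interval carries at least (3/4)W points of L
  have hint : ∀ q : ℕ, ((2^(Λ+1):ℕ):ℝ) * (3/4)
      ≤ ((L ∩ Set.Ico (q*4^(Λ+1) + 2^(2*Λ+1))
          (q*4^(Λ+1) + 2^(2*Λ+1) + 2^(Λ+1))).ncard : ℝ) := by
    intro q
    have hIfin : (Set.Ico (q*4^(Λ+1) + 2^(2*Λ+1))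
        (q*4^(Λ+1) + 2^(2*Λ+1) + 2^(Λ+1))).Finite := Set.finite_Ico _ _
    have hIW : (Set.Ico (q*4^(Λ+1) + 2^(2*Λ+1))
        (q*4^(Λ+1) + 2^(2*Λ+1) + 2^(Λ+1))).ncard = 2^(Λ+1) := by
      rw [ncard_Ico, Nat.add_sub_cancel_left]
    have hsplit : (Set.Ico (q*4^(Λ+1) + 2^(2*Λ+1)) (q*4^(Λ+1) + 2^(2*Λ+1) + 2^(Λ+1)))
        ⊆ (L ∩ Set.Ico (q*4^(Λ+1) + 2^(2*Λ+1)) (q*4^(Λ+1) + 2^(2*Λ+1) + 2^(Λ+1)))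
          ∪ (Set.Ico (q*4^(Λ+1) + 2^(2*Λ+1)) (q*4^(Λ+1) + 2^(2*Λ+1) + 2^(Λ+1)) \ L) := by
      intro x hx
      by_cases hxL : x ∈ L
      · exact Or.inl ⟨hxL, hx⟩
      · exact Or.inr ⟨hx, hxL⟩
    have h1 : (Set.Ico (q*4^(Λ+1) + 2^(2*Λ+1)) (q*4^(Λ+1) + 2^(2*Λ+1) + 2^(Λ+1))).ncard
        ≤ (L ∩ Set.Ico (q*4^(Λ+1) + 2^(2*Λ+1)) (q*4^(Λ+1) + 2^(2*Λ+1) + 2^(Λ+1))).ncard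
          + (Set.Ico (q*4^(Λ+1) + 2^(2*Λ+1)) (q*4^(Λ+1) + 2^(2*Λ+1) + 2^(Λ+1)) \ L).ncard :=
      (Set.ncard_le_ncard hsplit ((hIfin.inter_of_right L).union (hIfin.diff (t := L)))).trans
        (Set.ncard_union_le _ _)
    have hcast : ((2^(Λ+1):ℕ):ℝ)
        ≤ ((L ∩ Set.Ico (q*4^(Λ+1) + 2^(2*Λ+1)) (q*4^(Λ+1) + 2^(2*Λ+1) + 2^(Λ+1))).ncard : ℝ)
          + ((Set.Ico (q*4^(Λ+1) + 2^(2*Λ+1)) (q*4^(Λ+1) + 2^(2*Λ+1) + 2^(Λ+1)) \ L).ncard : ℝ) := by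
      rw [hIW] at h1
      exact_mod_cast h1
    have hc := hcov q
    linarith
  -- sum over the Q grid intervals inside [0,N)
  have hsum : (Q:ℝ) * (((2^(Λ+1):ℕ):ℝ) * (3/4)) ≤ ((L ∩ Set.Ico 0 N).ncard : ℝ) := by
    have hg := ncard_gather L (4^(Λ+1)) (2^(2*Λ+1)) (2^(Λ+1)) (HW_le_P Λ) Q
    have hmono : (L ∩ Set.Ico 0 (Q*4^(Λ+1))).ncard ≤ (L ∩ Set.Ico 0 N).ncard :=
      Set.ncard_le_ncard
        (Set.inter_subset_inter_right L (Set.Ico_subset_Ico_right hQP)) (fin_inter _ _ _)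
    calc (Q:ℝ) * (((2^(Λ+1):ℕ):ℝ) * (3/4))
        = ∑ _q ∈ Finset.range Q, (((2^(Λ+1):ℕ):ℝ) * (3/4)) := by
          rw [Finset.sum_const, Finset.card_range, nsmul_eq_mul]
      _ ≤ ∑ q ∈ Finset.range Q, ((L ∩ Set.Ico (q*4^(Λ+1) + 2^(2*Λ+1))
            (q*4^(Λ+1) + 2^(2*Λ+1) + 2^(Λ+1))).ncard : ℝ) :=
          Finset.sum_le_sum fun q _ => hint q
      _ = ((∑ q ∈ Finset.range Q, (L ∩ Set.Ico (q*4^(Λ+1) + 2^(2*Λ+1))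
            (q*4^(Λ+1) + 2^(2*Λ+1) + 2^(Λ+1))).ncard : ℕ) : ℝ) := by
          push_cast; rfl
      _ ≤ (((L ∩ Set.Ico 0 (Q*4^(Λ+1))).ncard : ℕ) : ℝ) := by exact_mod_cast hg
      _ ≤ _ := by exact_mod_cast hmono
  -- the tail D i is sparse on [0,N)
  have hD : ((D i ∩ Set.Ico 0 N).ncard : ℝ) ≤ 3*(N:ℝ)*((2:ℝ)⁻¹)^i := by
    have hfinU : (⋃ j ∈ Finset.Ico i N, (G j ∩ Set.Ico 0 N)).Finite :=
      Set.Finite.biUnion (Finset.finite_toSet _) (fun j _ => fin_inter _ _ _)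
    have h1 : (D i ∩ Set.Ico 0 N).ncard ≤ ∑ j ∈ Finset.Ico i N, (G j ∩ Set.Ico 0 N).ncard :=
      (Set.ncard_le_ncard (D_sub i N) hfinU).trans (ncard_biUnion_le _ _)
    have h2 : ((D i ∩ Set.Ico 0 N).ncard : ℝ)
        ≤ ∑ j ∈ Finset.Ico i N, ((G j ∩ Set.Ico 0 N).ncard : ℝ) := by
      exact_mod_cast h1
    have h3 : ∑ j ∈ Finset.Ico i N, ((G j ∩ Set.Ico 0 N).ncard : ℝ)
        ≤ ∑ j ∈ Finset.Ico i N, 3*(N:ℝ)*((2:ℝ)⁻¹)^(j+1) :=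
      Finset.sum_le_sum fun j _ => G_count j N
    have h4 : ∑ j ∈ Finset.Ico i N, 3*(N:ℝ)*((2:ℝ)⁻¹)^(j+1)
        = 3*(N:ℝ) * ∑ j ∈ Finset.Ico i N, ((2:ℝ)⁻¹)^(j+1) := by
      rw [Finset.mul_sum]
    have h5 : 3*(N:ℝ) * ∑ j ∈ Finset.Ico i N, ((2:ℝ)⁻¹)^(j+1)
        ≤ 3*(N:ℝ) * ((2:ℝ)⁻¹)^i :=
      mul_le_mul_of_nonneg_left (sum_halves_le i N) (by positivity)
    linarith
  -- splitting
  have hc : (L ∩ Set.Ico 0 N).ncard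
      ≤ ((L \ D i) ∩ Set.Ico 0 N).ncard + (D i ∩ Set.Ico 0 N).ncard := by
    have hsplit2 : (L ∩ Set.Ico 0 N) ⊆ ((L \ D i) ∩ Set.Ico 0 N) ∪ (D i ∩ Set.Ico 0 N) := by
      rintro x ⟨hxL, hxI⟩
      by_cases hxD : x ∈ D i
      · exact Or.inr ⟨hxD, hxI⟩
      · exact Or.inl ⟨⟨hxL, hxD⟩, hxI⟩
    exact (Set.ncard_le_ncard hsplit2
      ((fin_inter _ _ _).union (fin_inter _ _ _))).trans (Set.ncard_union_le _ _)
  have hcR : ((L ∩ Set.Ico 0 N).ncard : ℝ)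
      ≤ (((L \ D i) ∩ Set.Ico 0 N).ncard : ℝ) + ((D i ∩ Set.Ico 0 N).ncard : ℝ) := by
    exact_mod_cast hc
  -- final arithmetic
  have hWA : ((2^(Λ+1):ℕ):ℝ) = A := by rw [hA]; push_cast; ring
  have hPA : ((4^(Λ+1):ℕ):ℝ) = A^2 := by
    rw [hA]
    push_cast
    rw [show (4:ℝ) = 2^2 by norm_num, ← pow_mul, sq, ← pow_add]
    ring_nf
  have hQR : (N:ℝ) < ((Q:ℝ)+1) * A^2 := by
    rw [← hPA]
    exact_mod_cast hNQ
  have h16 : 16 * A^2 ≤ (N:ℝ) := by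
    rw [← hPA]
    exact_mod_cast hN16
  have hpowi : ((2:ℝ)⁻¹)^i ≤ 1/(32*A) := by
    have h1 : ((2:ℝ)⁻¹)^i ≤ ((2:ℝ)⁻¹)^(Λ+6) :=
      pow_le_pow_of_le_one (by norm_num) (by norm_num) hi
    have h2 : ((2:ℝ)⁻¹)^(Λ+6) = 1/(32*A) := by
      rw [hA, inv_pow, one_div]
      congr 1
      rw [show Λ+6 = (Λ+1)+5 by ring, pow_add]
      ring
    linarith
  have hpowΛ : ((2:ℝ)⁻¹)^(Λ+2) = 1/(2*A) := by
    rw [hA, inv_pow, one_div]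
    congr 1
    rw [show Λ+2 = (Λ+1)+1 by ring, pow_succ]
    ring
  rw [hpowΛ]
  have hA2 : (0:ℝ) < A^2 := by positivity
  have hQge : (N:ℝ)/A^2 - 1 ≤ (Q:ℝ) := by
    rw [sub_le_iff_le_add, div_le_iff₀ hA2]
    nlinarith [hQR]
  have hfin1 : (Q:ℝ)*(A*(3/4)) - 3*(N:ℝ)*((2:ℝ)⁻¹)^i
      ≤ (((L \ D i) ∩ Set.Ico 0 N).ncard : ℝ) := by
    have hs := hsum
    rw [hWA] at hs
    linarith
  have hp3 : 3*(N:ℝ)*((2:ℝ)⁻¹)^i ≤ ((N:ℝ)/A)*(3/32) := by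
    have hstep : 3*(N:ℝ)*((2:ℝ)⁻¹)^i ≤ 3*(N:ℝ)*(1/(32*A)) :=
      mul_le_mul_of_nonneg_left hpowi (by positivity)
    have he : 3*(N:ℝ)*(1/(32*A)) = ((N:ℝ)/A)*(3/32) := by
      field_simp
    linarith
  have hQterm : ((N:ℝ)/A^2 - 1)*(A*(3/4)) ≤ (Q:ℝ)*(A*(3/4)) :=
    mul_le_mul_of_nonneg_right hQge (by positivity)
  have hexp : ((N:ℝ)/A^2 - 1)*(A*(3/4)) = ((N:ℝ)/A)*(3/4) - A*(3/4) := by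
    field_simp
  have hNA : 16*A ≤ (N:ℝ)/A := by
    rw [le_div_iff₀ hApos]
    nlinarith [h16]
  have hlhs : (N:ℝ) * (1/(2*A)) = ((N:ℝ)/A)*(1/2) := by
    rw [one_div, mul_inv]
    ring
  rw [hlhs]
  have hApos' : (0:ℝ) ≤ A := le_of_lt hApos
  rw [hexp] at hQterm
  have final : ((N:ℝ)/A)*(1/2) ≤ (Q:ℝ)*(A*(3/4)) - 3*(N:ℝ)*((2:ℝ)⁻¹)^i := by
    linarith
  linarith

end NotCompleteAux

open NotCompleteAux

/-- If `μ*` is an upper density on `ℕ` with `bd*(A) ≤ μ*(A)` for all `A`,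
then `(𝒫(ℕ), d_{μ*})` is not complete: there is a `d_{μ*}`-Cauchy sequence that does not
`d_{μ*}`-converge to any subset of `ℕ`. -/
theorem not_complete_of_upperBanachDensity_le
    (μs : Set ℕ → ℝ)
    (hF1 : μs Set.univ = 1)
    (hF2 : ∀ A B : Set ℕ, A ⊆ B → μs A ≤ μs B)
    (hF3 : ∀ A B : Set ℕ, μs (A ∪ B) ≤ μs A + μs B)
    (hF4 : ∀ (A : Set ℕ) (k : ℕ), k ≠ 0 → μs ((fun a => k * a) '' A) = μs A / k)
    (hF5 : ∀ (A : Set ℕ) (h : ℕ), μs ((fun a => a + h) '' A) = μs A)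
    (hbd : ∀ A : Set ℕ, upperBanachDensity A ≤ μs A) :
    ∃ A : ℕ → Set ℕ,
      (∀ ε : ℝ, 0 < ε → ∃ N : ℕ, ∀ m ≥ N, ∀ n ≥ N,
        min 1 (μs (symmDiff (A m) (A n))) < ε) ∧
      ∀ L : Set ℕ,
        ¬ Tendsto (fun n => min 1 (μs (symmDiff (A n) L))) atTop (nhds 0) := by
  refine ⟨D, ?_, ?_⟩
  · -- Cauchy
    intro ε hε
    obtain ⟨N, hN⟩ := exists_pow_lt_of_lt_one hε (show (2:ℝ)⁻¹ < 1 by norm_num)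
    refine ⟨N, fun m hm n hn => ?_⟩
    have key : ∀ a b : ℕ, N ≤ a → a ≤ b → min 1 (μs (symmDiff (D b) (D a))) < ε := by
      intro a b ha hab
      calc min 1 (μs (symmDiff (D b) (D a))) ≤ μs (symmDiff (D b) (D a)) := min_le_right _ _
        _ ≤ ((2:ℝ)⁻¹)^a := mu_cauchy hF1 hF2 hF3 hF4 hF5 hab
        _ ≤ ((2:ℝ)⁻¹)^N := pow_le_pow_of_le_one (by norm_num) (by norm_num) ha
        _ < ε := hN
    rcases le_total m n with h | h
    · rw [symmDiff_comm]; exact key m n hm h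
    · exact key n m hn h
  · -- non-convergence
    intro L hT
    -- Step 1: choose i₀ with small distance, and a window scale N₀
    obtain ⟨i₀, hi₀⟩ := (hT.eventually_lt_const (show (0:ℝ) < 1/8 by norm_num)).exists
    have hmu₀ : μs (symmDiff (D i₀) L) < 1/8 := by
      rcases min_lt_iff.1 hi₀ with h | h
      · norm_num at h
      · exact h
    have hbd₀ : upperBanachDensity (symmDiff (D i₀) L) < 1/8 := (hbd _).trans_lt hmu₀
    obtain ⟨N₀, hN₀pos, hwin⟩ := window_lt_of_bd_lt hbd₀
    -- the distinguished grid level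
    set Λ : ℕ := i₀ + N₀ with hΛ
    have hN₀W : N₀ ≤ 2^(Λ+1) := by
      have h1 : N₀ ≤ Λ := by omega
      have h2 : Λ < 2^Λ := Nat.lt_two_pow_self (n := Λ)
      have h3 : (2:ℕ)^Λ ≤ 2^(Λ+1) := Nat.pow_le_pow_right (by norm_num) (by omega)
      omega
    -- Step 2 (coverage): every level-Λ grid interval is mostly covered by L
    have hcover : ∀ q : ℕ,
        ((Set.Ico (q*4^(Λ+1) + 2^(2*Λ+1)) (q*4^(Λ+1) + 2^(2*Λ+1) + 2^(Λ+1)) \ L).ncard : ℝ)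
          ≤ ((2^(Λ+1) : ℕ) : ℝ)/4 :=
      cover L i₀ N₀ Λ (by omega) hN₀pos hN₀W hwin
    -- Step 3 (main window estimate)
    have hmain : ∀ i, Λ + 6 ≤ i → ∀ N : ℕ, 16 * 4^(Λ+1) ≤ N →
        (N:ℝ) * ((2:ℝ)⁻¹)^(Λ+2) ≤ (((L \ D i) ∩ Set.Ico 0 N).ncard : ℝ) :=
      main_window L Λ hcover
    -- Step 4: lower bound for the Banach density of the symmetric differences
    set c₀ : ℝ := ((2:ℝ)⁻¹)^(Λ+2) with hc₀
    have hc₀pos : 0 < c₀ := by positivity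
    have hc₀le1 : c₀ ≤ 1 := pow_le_one₀ (by norm_num) (by norm_num)
    have hbdge : ∀ i, Λ + 6 ≤ i → c₀ ≤ upperBanachDensity (symmDiff (D i) L) := by
      intro i hi
      apply bd_ge
      intro n
      by_contra hno
      push_neg at hno
      set q : ℕ := 16 * 4^(Λ+1) with hq
      have hqpos : 0 < q := by positivity
      have hNge : 16 * 4^(Λ+1) ≤ q*(n+1) := Nat.le_mul_of_pos_right _ (Nat.succ_pos n)
      have hmain' := hmain i hi (q*(n+1)) hNge
      -- window counts of `L \ D i` are below average: contradiction
      have hSsub : ∀ a b : ℕ, (((L \ D i) ∩ Set.Ico a b).ncard : ℝ)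
          ≤ (((symmDiff (D i) L) ∩ Set.Ico a b).ncard : ℝ) := by
        intro a b
        have : ((L \ D i) ∩ Set.Ico a b) ⊆ ((symmDiff (D i) L) ∩ Set.Ico a b) := by
          rintro x ⟨⟨hx1, hx2⟩, hx3⟩
          exact ⟨Set.mem_symmDiff.2 (Or.inr ⟨hx1, hx2⟩), hx3⟩
        exact_mod_cast Set.ncard_le_ncard this (fin_inter _ _ _)
      have hsplit := ncard_split (L \ D i) 0 (n+1) q
      simp only [Nat.zero_add] at hsplit
      have hsplitR : (((L \ D i) ∩ Set.Ico 0 (q*(n+1))).ncard : ℝ)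
          ≤ ∑ t ∈ Finset.range q, (((L \ D i) ∩ Set.Ico (t*(n+1)) (t*(n+1)+(n+1))).ncard : ℝ) := by
        exact_mod_cast hsplit
      have hterm : ∀ t ∈ Finset.range q,
          (((L \ D i) ∩ Set.Ico (t*(n+1)) (t*(n+1)+(n+1))).ncard : ℝ) < c₀ * ((n:ℝ)+1) :=
        fun t _ => lt_of_le_of_lt (hSsub _ _) (hno (t*(n+1)))
      have hsumlt : ∑ t ∈ Finset.range q, (((L \ D i)
            ∩ Set.Ico (t*(n+1)) (t*(n+1)+(n+1))).ncard : ℝ)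
          < ∑ _t ∈ Finset.range q, c₀ * ((n:ℝ)+1) :=
        Finset.sum_lt_sum_of_nonempty (Finset.nonempty_range_iff.2 (by omega)) hterm
      have hsumval : ∑ _t ∈ Finset.range q, c₀ * ((n:ℝ)+1) = (q:ℝ) * (c₀ * ((n:ℝ)+1)) := by
        rw [Finset.sum_const, Finset.card_range, nsmul_eq_mul]
      have hmaineq : ((q*(n+1) : ℕ):ℝ) * c₀ = (q:ℝ) * (c₀ * ((n:ℝ)+1)) := by
        push_cast; ring
      rw [hsumval] at hsumlt
      rw [hmaineq] at hmain'
      linarith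
    -- Step 5: contradiction
    obtain ⟨i, hi1, hi2⟩ := ((hT.eventually_lt_const hc₀pos).and (eventually_ge_atTop (Λ+6))).exists
    have hge : c₀ ≤ min 1 (μs (symmDiff (D i) L)) :=
      le_min hc₀le1 ((hbdge i hi2).trans (hbd _))
    linarith
end

section
/- The pseudometric space (𝒫(ℕ), d_{bd*}) is not complete, where bd* is the upper Banach density: there exists a d_{bd*}-Cauchy sequence of subsets of ℕ that does not d_{bd*}-converge to any subset of ℕ. -/
open Filter Topology

namespace BanachAux
open Finset
open scoped Classical


/-- The building blocks: `Bset i` is a periodic set of intervals of length `2^(5^i)`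
with period `2^(5^(i+1))`, starting at offset `2^(5^i)`. -/
def Bset (i : ℕ) : Set ℕ :=
  {x | 2 ^ 5 ^ i ≤ x % 2 ^ 5 ^ (i + 1) ∧ x % 2 ^ 5 ^ (i + 1) < 2 ^ (5 ^ i + 1)}

/-- The Cauchy sequence: `x ∈ Aseq n` iff `x` belongs to exactly one `Bset i` with `i ≥ n`. -/
def Aseq (n : ℕ) : Set ℕ :=
  {x | ∃ i, n ≤ i ∧ x ∈ Bset i ∧ ∀ j, n ≤ j → x ∈ Bset j → j = i}

noncomputable def cnt (S : Set ℕ) (k W : ℕ) : ℕ :=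
  ((Finset.Ico k (k + W)).filter (fun x => x ∈ S)).card

lemma cnt_eq_ncard (S : Set ℕ) (k W : ℕ) :
    (S ∩ Set.Ico k (k + W)).ncard = cnt S k W := by
  rw [cnt, ← Set.ncard_coe_finset]
  congr 1
  ext x
  simp [Set.mem_Ico, and_comm]

lemma cnt_le (S : Set ℕ) (k W : ℕ) : cnt S k W ≤ W := by
  calc ((Finset.Ico k (k + W)).filter (fun x => x ∈ S)).card
      ≤ (Finset.Ico k (k + W)).card := Finset.card_filter_le _ _
    _ = W := by rw [Nat.card_Ico]; omega

lemma cnt_mono {S T : Set ℕ} (h : S ⊆ T) (k W : ℕ) : cnt S k W ≤ cnt T k W := by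
  apply Finset.card_le_card
  intro x hx
  simp only [Finset.mem_filter] at hx ⊢
  exact ⟨hx.1, h hx.2⟩

lemma bddAbove_density (S : Set ℕ) (w : ℕ) :
    BddAbove (Set.range fun k => ((S ∩ Set.Ico k (k + (w + 1))).ncard : ℝ) / (w + 1)) := by
  refine ⟨1, ?_⟩
  rintro y ⟨k, rfl⟩
  dsimp only
  rw [cnt_eq_ncard]
  have h1 : (cnt S k (w + 1) : ℝ) ≤ (w + 1 : ℕ) := by
    exact_mod_cast cnt_le S k (w + 1)
  have hpos : (0:ℝ) < (w : ℝ) + 1 := by positivity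
  rw [div_le_one hpos]
  push_cast at h1 ⊢
  linarith

lemma ubd_nonneg_aux (S : Set ℕ) (w : ℕ) :
    (0:ℝ) ≤ ⨆ k : ℕ, ((S ∩ Set.Ico k (k + (w + 1))).ncard : ℝ) / (w + 1) := by
  apply Real.iSup_nonneg
  intro k
  positivity

lemma ubd_le (S : Set ℕ) (w : ℕ) (c : ℝ)
    (h : ∀ k, (cnt S k (w + 1) : ℝ) ≤ c * (w + 1)) :
    upperBanachDensity S ≤ c := by
  have hbdd : BddBelow (Set.range fun n : ℕ =>
      ⨆ k : ℕ, ((S ∩ Set.Ico k (k + (n + 1))).ncard : ℝ) / (n + 1)) := by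
    refine ⟨0, ?_⟩
    rintro y ⟨n, rfl⟩
    exact ubd_nonneg_aux S n
  refine ciInf_le_of_le hbdd w ?_
  apply ciSup_le
  intro k
  rw [cnt_eq_ncard]
  have hpos : (0:ℝ) < (w : ℝ) + 1 := by positivity
  rw [div_le_iff₀ hpos]
  have := h k
  push_cast at this ⊢
  linarith

lemma ubd_lt (S : Set ℕ) (c : ℝ) (h : upperBanachDensity S < c) :
    ∃ M : ℕ, 0 < M ∧ ∀ k, (cnt S k M : ℝ) < c * M := by
  obtain ⟨w, hw⟩ := exists_lt_of_ciInf_lt h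
  refine ⟨w + 1, Nat.succ_pos _, ?_⟩
  intro k
  have hle : ((S ∩ Set.Ico k (k + (w + 1))).ncard : ℝ) / (w + 1) ≤
      ⨆ k : ℕ, ((S ∩ Set.Ico k (k + (w + 1))).ncard : ℝ) / (w + 1) :=
    le_ciSup (bddAbove_density S w) k
  have hlt := lt_of_le_of_lt hle hw
  rw [cnt_eq_ncard] at hlt
  have hpos : (0:ℝ) < (w : ℝ) + 1 := by positivity
  rw [div_lt_iff₀ hpos] at hlt
  push_cast at hlt ⊢
  linarith

/-- Core counting lemma: number of `x` in a window of length `W` with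
`x % m ∈ [lo, lo+h)` is at most `(W/m + 2)*h`. -/
lemma cnt_mod (m lo h k W : ℕ) (hm : 0 < m) :
    ((Finset.Ico k (k + W)).filter
      (fun x => lo ≤ x % m ∧ x % m < lo + h)).card ≤ (W / m + 2) * h := by
  classical
  have hinj : ∀ x ∈ (Finset.Ico k (k + W)).filter
      (fun x => lo ≤ x % m ∧ x % m < lo + h),
      (x / m, x % m - lo) ∈ (Finset.Icc (k / m) ((k + W) / m)) ×ˢ Finset.range h := by
    intro x hx
    simp only [Finset.mem_filter, Finset.mem_Ico] at hx
    obtain ⟨⟨hx1, hx2⟩, hx3, hx4⟩ := hx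
    simp only [Finset.mem_product, Finset.mem_Icc, Finset.mem_range]
    refine ⟨⟨Nat.div_le_div_right hx1, Nat.div_le_div_right (le_of_lt hx2)⟩, ?_⟩
    omega
  have hcard := Finset.card_le_card_of_injOn _ hinj ?_
  · calc ((Finset.Ico k (k + W)).filter
        (fun x => lo ≤ x % m ∧ x % m < lo + h)).card
        ≤ ((Finset.Icc (k / m) ((k + W) / m)) ×ˢ Finset.range h).card := hcard
      _ = ((k + W) / m + 1 - k / m) * h := by
          rw [Finset.card_product, Nat.card_Icc, Finset.card_range]
      _ ≤ (W / m + 2) * h := by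
          have h2 : (k + W) / m ≤ k / m + W / m + 1 := by
            rw [Nat.add_div hm]
            split <;> omega
          have h4 : k / m ≤ (k + W) / m := Nat.div_le_div_right (Nat.le_add_right _ _)
          exact Nat.mul_le_mul (by omega) le_rfl
  · intro x hx y hy hxy
    simp only [Finset.mem_coe, Finset.mem_filter] at hx hy
    obtain ⟨_, hx3, _⟩ := hx
    obtain ⟨_, hy3, _⟩ := hy
    have h1 : x / m = y / m := congrArg Prod.fst hxy
    have h2 : x % m - lo = y % m - lo := congrArg Prod.snd hxy
    have h3 : x % m = y % m := by omega
    have e1 : x = m * (x / m) + x % m := (Nat.div_add_mod x m).symm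
    have e2 : y = m * (y / m) + y % m := (Nat.div_add_mod y m).symm
    rw [e1, e2, h1, h3]

/-- count of `Bset i` in any window -/
lemma cnt_B (i k W : ℕ) :
    cnt (Bset i) k W ≤ (W / 2 ^ 5 ^ (i + 1) + 2) * 2 ^ 5 ^ i := by
  have h := cnt_mod (2 ^ 5 ^ (i + 1)) (2 ^ 5 ^ i) (2 ^ 5 ^ i) k W (by positivity)
  refine le_trans (le_of_eq ?_) h
  unfold cnt
  congr 1
  apply Finset.filter_congr
  intro x _
  simp only [Bset, Set.mem_setOf_eq]
  constructor
  · rintro ⟨h1, h2⟩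
    refine ⟨h1, ?_⟩
    have : 2 ^ (5 ^ i + 1) = 2 ^ 5 ^ i + 2 ^ 5 ^ i := by ring
    omega
  · rintro ⟨h1, h2⟩
    refine ⟨h1, ?_⟩
    have : 2 ^ (5 ^ i + 1) = 2 ^ 5 ^ i + 2 ^ 5 ^ i := by ring
    omega

/-- a geometric-type sum bound: if `g` decreases by at least 1 at each step,
the sum of `2^(g i)` is at most `2^(g s + 1)`. -/
lemma sum_pow_dec (g : ℕ → ℕ) :
    ∀ d s, (∀ i, s ≤ i → i + 1 < s + d → g (i + 1) + 1 ≤ g i) →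
    (∑ i ∈ Finset.Ico s (s + d), 2 ^ g i) ≤ 2 ^ (g s + 1) := by
  intro d
  induction d with
  | zero => intro s _; simp
  | succ d ih =>
    intro s hg
    rw [show s + (d + 1) = (s + 1) + d by omega]
    rw [Finset.sum_eq_sum_Ico_succ_bot (by omega : s < s + 1 + d)]
    rcases Nat.eq_zero_or_pos d with hd | hd
    · subst hd
      simp
      calc 2 ^ g s ≤ 2 ^ g s + 2 ^ g s := Nat.le_add_right _ _
        _ = 2 ^ (g s + 1) := by ring
    · have h1 : (∑ i ∈ Finset.Ico (s + 1) (s + 1 + d), 2 ^ g i) ≤ 2 ^ (g (s + 1) + 1) := by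
        apply ih
        intro i hi hi2
        exact hg i (by omega) (by omega)
      have h2 : g (s + 1) + 1 ≤ g s := hg s le_rfl (by omega)
      calc 2 ^ g s + (∑ i ∈ Finset.Ico (s + 1) (s + 1 + d), 2 ^ g i)
          ≤ 2 ^ g s + 2 ^ (g (s + 1) + 1) := by omega
        _ ≤ 2 ^ g s + 2 ^ g s := by
            have := Nat.pow_le_pow_right (by norm_num : 1 ≤ 2) h2
            omega
        _ = 2 ^ (g s + 1) := by ring

lemma sum_pow_inc (g : ℕ → ℕ) :
    ∀ d s, (∀ i, s ≤ i → i + 1 < s + d → g i + 1 ≤ g (i + 1)) →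
    (∑ i ∈ Finset.Ico s (s + d), 2 ^ g i) ≤ 2 ^ (g (s + d - 1) + 1) := by
  intro d
  induction d with
  | zero => intro s _; simp
  | succ d ih =>
    intro s hg
    rw [show s + (d + 1) = (s + d) + 1 by omega]
    rw [Finset.sum_Ico_succ_top (by omega : s ≤ s + d)]
    rcases Nat.eq_zero_or_pos d with hd | hd
    · subst hd
      simp
      calc 2 ^ g s ≤ 2 ^ g s + 2 ^ g s := Nat.le_add_right _ _
        _ = 2 ^ (g s + 1) := by ring
    · have h1 : (∑ i ∈ Finset.Ico s (s + d), 2 ^ g i) ≤ 2 ^ (g (s + d - 1) + 1) := by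
        apply ih
        intro i hi hi2
        exact hg i hi (by omega)
      have h2 : g (s + d - 1) + 1 ≤ g (s + d) := by
        have := hg (s + d - 1) (by omega) (by omega)
        have he : s + d - 1 + 1 = s + d := by omega
        rwa [he] at this
      have h3 : 2 ^ (g (s + d - 1) + 1) ≤ 2 ^ g (s + d) :=
        Nat.pow_le_pow_right (by norm_num) h2
      rw [show s + d + 1 - 1 = s + d by omega]
      calc (∑ i ∈ Finset.Ico s (s + d), 2 ^ g i) + 2 ^ g (s + d)
          ≤ 2 ^ g (s + d) + 2 ^ g (s + d) := by omega
        _ = 2 ^ (g (s + d) + 1) := by ring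


lemma sum_pow_dec' (g : ℕ → ℕ) (s t : ℕ)
    (hg : ∀ i, s ≤ i → i + 1 < t → g (i + 1) + 1 ≤ g i) :
    (∑ i ∈ Finset.Ico s t, 2 ^ g i) ≤ 2 ^ (g s + 1) := by
  rcases le_or_gt t s with h | h
  · rw [Finset.Ico_eq_empty (by omega)]
    simp
  · have := sum_pow_dec g (t - s) s (by intro i h1 h2; exact hg i h1 (by omega))
    rwa [show s + (t - s) = t by omega] at this

lemma sum_pow_inc' (g : ℕ → ℕ) (s t : ℕ)
    (hg : ∀ i, s ≤ i → i + 1 < t → g i + 1 ≤ g (i + 1)) :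
    (∑ i ∈ Finset.Ico s t, 2 ^ g i) ≤ 2 ^ (g (t - 1) + 1) := by
  rcases le_or_gt t s with h | h
  · rw [Finset.Ico_eq_empty (by omega)]
    simp
  · have := sum_pow_inc g (t - s) s (by intro i h1 h2; exact hg i h1 (by omega))
    rwa [show s + (t - s) = t by omega] at this

/-- counting a set covered by finitely many sets -/
lemma cnt_union (S : Set ℕ) (F : ℕ → Set ℕ) (t : Finset ℕ)
    (hS : ∀ x, x ∈ S → ∃ i ∈ t, x ∈ F i) (k W : ℕ) :
    cnt S k W ≤ ∑ i ∈ t, cnt (F i) k W := by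
  unfold cnt
  calc ((Finset.Ico k (k + W)).filter (fun x => x ∈ S)).card
      ≤ (t.biUnion (fun i => (Finset.Ico k (k + W)).filter (fun x => x ∈ F i))).card := by
        apply Finset.card_le_card
        intro x hx
        simp only [Finset.mem_filter] at hx
        obtain ⟨i, hi, hFi⟩ := hS x hx.2
        simp only [Finset.mem_biUnion, Finset.mem_filter]
        exact ⟨i, hi, hx.1, hFi⟩
    _ ≤ ∑ i ∈ t, ((Finset.Ico k (k + W)).filter (fun x => x ∈ F i)).card :=
        Finset.card_biUnion_le

/-- the symmetric difference of two terms of the sequence is covered by the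
blocks in between -/
lemma symmDiff_subset (m n : ℕ) (hmn : m ≤ n) :
    ∀ x, x ∈ symmDiff (Aseq m) (Aseq n) → ∃ i ∈ Finset.Ico m n, x ∈ Bset i := by
  intro x hx
  by_contra hcon
  push_neg at hcon
  simp only [Finset.mem_Ico] at hcon
  have key : x ∈ Aseq m ↔ x ∈ Aseq n := by
    constructor
    · rintro ⟨i, hi1, hi2, hi3⟩
      have hin : n ≤ i := by
        rcases le_or_gt n i with h | h
        · exact h
        · exact absurd hi2 (hcon i ⟨hi1, h⟩)
      exact ⟨i, hin, hi2, fun j hj hBj => hi3 j (le_trans hmn hj) hBj⟩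
    · rintro ⟨i, hi1, hi2, hi3⟩
      refine ⟨i, le_trans hmn hi1, hi2, ?_⟩
      intro j hj hBj
      rcases le_or_gt n j with h | h
      · exact hi3 j h hBj
      · exact absurd hBj (hcon j ⟨hj, h⟩)
  rw [Set.mem_symmDiff] at hx
  tauto

/-- tiling: a uniform window bound at scale `M` gives a bound at any scale. -/
lemma cnt_tile (S : Set ℕ) (M : ℕ) (c : ℝ) (hM : 0 < M) (hc : 0 ≤ c)
    (h : ∀ k, (cnt S k M : ℝ) ≤ c * M) (A len : ℕ) :
    (cnt S A len : ℝ) ≤ c * len + c * M := by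
  have hnat : cnt S A len ≤ ∑ j ∈ Finset.range (len / M + 1), cnt S (A + j * M) M := by
    unfold cnt
    calc ((Finset.Ico A (A + len)).filter (fun x => x ∈ S)).card
        ≤ ((Finset.range (len / M + 1)).biUnion
            (fun j => (Finset.Ico (A + j * M) (A + j * M + M)).filter (fun x => x ∈ S))).card := by
          apply Finset.card_le_card
          intro x hx
          simp only [Finset.mem_filter, Finset.mem_Ico] at hx
          obtain ⟨⟨hx1, hx2⟩, hxS⟩ := hx
          simp only [Finset.mem_biUnion, Finset.mem_filter, Finset.mem_Ico, Finset.mem_range]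
          refine ⟨(x - A) / M, ?_, ⟨?_, ?_⟩, hxS⟩
          · have : (x - A) / M ≤ len / M := Nat.div_le_div_right (by omega)
            omega
          · have := Nat.div_mul_le_self (x - A) M
            omega
          · have h5 : x - A < (x - A) / M * M + M := Nat.lt_div_mul_add hM
            omega
      _ ≤ ∑ j ∈ Finset.range (len / M + 1),
            ((Finset.Ico (A + j * M) (A + j * M + M)).filter (fun x => x ∈ S)).card :=
          Finset.card_biUnion_le
  have hreal : (cnt S A len : ℝ) ≤ (len / M + 1 : ℕ) * (c * M) := by
    calc (cnt S A len : ℝ) ≤ (∑ j ∈ Finset.range (len / M + 1), cnt S (A + j * M) M : ℕ) := by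
          exact_mod_cast hnat
      _ = ∑ j ∈ Finset.range (len / M + 1), (cnt S (A + j * M) M : ℝ) := by push_cast; ring
      _ ≤ ∑ j ∈ Finset.range (len / M + 1), c * M := Finset.sum_le_sum (fun j _ => h _)
      _ = (len / M + 1 : ℕ) * (c * M) := by
          rw [Finset.sum_const, Finset.card_range]
          push_cast
          ring
  calc (cnt S A len : ℝ) ≤ (len / M + 1 : ℕ) * (c * M) := hreal
    _ ≤ c * len + c * M := by
        have h1 : ((len / M : ℕ) : ℝ) * M ≤ (len : ℝ) := by
          exact_mod_cast Nat.div_mul_le_self len M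
        push_cast
        nlinarith [h1, hc]


/-- The Cauchy estimate. -/
lemma cauchy_bound (m n : ℕ) (hmn : m ≤ n) :
    upperBanachDensity (symmDiff (Aseq m) (Aseq n)) ≤ 3 / 2 ^ (4 * 5 ^ m) := by
  set W := 2 ^ 5 ^ (n + 1) with hW
  have hWpos : 0 < W := by positivity
  have hkey : ∀ k, cnt (symmDiff (Aseq m) (Aseq n)) k W * 2 ^ (4 * 5 ^ m) ≤ 3 * W := by
    intro k
    have h1 : cnt (symmDiff (Aseq m) (Aseq n)) k W ≤
        ∑ i ∈ Finset.Ico m n, cnt (Bset i) k W :=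
      cnt_union _ _ _ (symmDiff_subset m n hmn) k W
    have h2 : ∀ i ∈ Finset.Ico m n, cnt (Bset i) k W ≤
        2 ^ (5 ^ (n + 1) - 5 ^ (i + 1) + 5 ^ i) + 2 ^ (5 ^ i + 1) := by
      intro i hi
      simp only [Finset.mem_Ico] at hi
      refine le_trans (cnt_B i k W) (le_of_eq ?_)
      have hle : 5 ^ (i + 1) ≤ 5 ^ (n + 1) := Nat.pow_le_pow_right (by norm_num) (by omega)
      have hdiv : W / 2 ^ 5 ^ (i + 1) = 2 ^ (5 ^ (n + 1) - 5 ^ (i + 1)) := by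
        rw [hW, Nat.pow_div hle (by norm_num)]
      rw [hdiv, add_mul, ← pow_add, pow_succ]
      ring
    have h3 : cnt (symmDiff (Aseq m) (Aseq n)) k W ≤
        (∑ i ∈ Finset.Ico m n, 2 ^ (5 ^ (n + 1) - 5 ^ (i + 1) + 5 ^ i)) +
        (∑ i ∈ Finset.Ico m n, 2 ^ (5 ^ i + 1)) := by
      rw [← Finset.sum_add_distrib]
      exact le_trans h1 (Finset.sum_le_sum h2)
    rcases eq_or_lt_of_le hmn with heq | hlt
    · subst heq
      simp only [Finset.Ico_self, Finset.sum_empty, add_zero, Nat.le_zero] at h3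
      rw [h3, Nat.zero_mul]
      positivity
    -- m < n
    have hS1 : (∑ i ∈ Finset.Ico m n, 2 ^ (5 ^ (n + 1) - 5 ^ (i + 1) + 5 ^ i)) ≤
        2 ^ (5 ^ (n + 1) - 5 ^ (m + 1) + 5 ^ m + 1) := by
      apply sum_pow_dec'
      intro i h1' h2'
      have hP : 1 ≤ 5 ^ i := Nat.one_le_pow _ _ (by norm_num)
      have e1 : 5 ^ (i + 1) = 5 * 5 ^ i := by rw [pow_succ]; ring
      have e2 : 5 ^ (i + 2) = 25 * 5 ^ i := by rw [pow_succ, pow_succ]; ring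
      have e3 : 5 ^ (i + 2) ≤ 5 ^ (n + 1) := Nat.pow_le_pow_right (by norm_num) (by omega)
      omega
    have hS2 : (∑ i ∈ Finset.Ico m n, 2 ^ (5 ^ i + 1)) ≤ 2 ^ (5 ^ (n - 1) + 2) := by
      have := sum_pow_inc' (fun i => 5 ^ i + 1) m n (by
        intro i h1' h2'
        show 5 ^ i + 1 + 1 ≤ 5 ^ (i + 1) + 1
        have hP : 1 ≤ 5 ^ i := Nat.one_le_pow _ _ (by norm_num)
        have e1 : 5 ^ (i + 1) = 5 * 5 ^ i := by rw [pow_succ]; ring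
        omega)
      simpa using this
    have hmul1 : 2 ^ (5 ^ (n + 1) - 5 ^ (m + 1) + 5 ^ m + 1) * 2 ^ (4 * 5 ^ m) = 2 * W := by
      rw [← pow_add, hW]
      have hle : 5 ^ (m + 1) ≤ 5 ^ (n + 1) := Nat.pow_le_pow_right (by norm_num) (by omega)
      have e1 : 5 ^ (m + 1) = 5 * 5 ^ m := by rw [pow_succ]; ring
      rw [show (2:ℕ) * 2 ^ 5 ^ (n + 1) = 2 ^ (5 ^ (n + 1) + 1) by rw [pow_succ]; ring]
      congr 1
      omega
    have hmul2 : 2 ^ (5 ^ (n - 1) + 2) * 2 ^ (4 * 5 ^ m) ≤ W := by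
      rw [← pow_add, hW]
      apply Nat.pow_le_pow_right (by norm_num)
      have h5 : 5 ^ m ≤ 5 ^ (n - 1) := Nat.pow_le_pow_right (by norm_num) (by omega)
      have hP : 1 ≤ 5 ^ (n - 1) := Nat.one_le_pow _ _ (by norm_num)
      have e1 : 5 ^ (n + 1) = 25 * 5 ^ (n - 1) := by
        rw [show n + 1 = (n - 1) + 2 by omega, pow_succ, pow_succ]
        ring
      omega
    calc cnt (symmDiff (Aseq m) (Aseq n)) k W * 2 ^ (4 * 5 ^ m)
        ≤ ((2 ^ (5 ^ (n + 1) - 5 ^ (m + 1) + 5 ^ m + 1)) + 2 ^ (5 ^ (n - 1) + 2)) *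
            2 ^ (4 * 5 ^ m) := by
          apply Nat.mul_le_mul (le_trans h3 (by omega)) le_rfl
      _ = 2 ^ (5 ^ (n + 1) - 5 ^ (m + 1) + 5 ^ m + 1) * 2 ^ (4 * 5 ^ m) +
            2 ^ (5 ^ (n - 1) + 2) * 2 ^ (4 * 5 ^ m) := by ring
      _ ≤ 2 * W + W := by omega
      _ = 3 * W := by ring
  -- conclude via ubd_le
  have hW1 : W - 1 + 1 = W := by omega
  apply ubd_le _ (W - 1)
  intro k
  rw [hW1]
  have hcast : ((W - 1 : ℕ) : ℝ) + 1 = (W : ℝ) := by exact_mod_cast hW1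
  rw [hcast]
  have hk := hkey k
  have hpow : (0:ℝ) < 2 ^ (4 * 5 ^ m) := by positivity
  rw [div_mul_eq_mul_div, le_div_iff₀ hpow]
  calc (cnt (symmDiff (Aseq m) (Aseq n)) k W : ℝ) * 2 ^ (4 * 5 ^ m)
      = ((cnt (symmDiff (Aseq m) (Aseq n)) k W * 2 ^ (4 * 5 ^ m) : ℕ) : ℝ) := by push_cast; ring
    _ ≤ ((3 * W : ℕ) : ℝ) := by exact_mod_cast hk
    _ = 3 * (W : ℝ) := by push_cast; ring


/-! ### The pieces used in the non-convergence proof -/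

section Pieces

/-- position of the `k`-th piece -/
def xpt (a c k u : ℕ) : ℕ := 2 ^ 5 ^ c + 2 ^ 5 ^ a + k * 2 ^ 5 ^ (a + 1) + u

lemma ea_lt_ea1 (a : ℕ) : 5 ^ a + 1 ≤ 5 ^ (a + 1) := by
  have hP : 1 ≤ 5 ^ a := Nat.one_le_pow _ _ (by norm_num)
  have e1 : 5 ^ (a + 1) = 5 * 5 ^ a := by rw [pow_succ]; ring
  omega

lemma xpt_lt (a c k u : ℕ) (hac : a + 1 ≤ c) (hu : u < 2 ^ 5 ^ a)
    (hk : k < 2 ^ (5 ^ c - 5 ^ (a + 1))) :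
    xpt a c k u < 2 ^ 5 ^ c + 2 ^ 5 ^ c := by
  unfold xpt
  have hle : 5 ^ (a + 1) ≤ 5 ^ c := Nat.pow_le_pow_right (by norm_num) hac
  have e1 : 2 ^ (5 ^ c - 5 ^ (a + 1)) * 2 ^ 5 ^ (a + 1) = 2 ^ 5 ^ c := by
    rw [← pow_add]; congr 1; omega
  have h2 : (k + 1) * 2 ^ 5 ^ (a + 1) ≤ 2 ^ 5 ^ c := by
    calc (k + 1) * 2 ^ 5 ^ (a + 1) ≤ 2 ^ (5 ^ c - 5 ^ (a + 1)) * 2 ^ 5 ^ (a + 1) :=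
          Nat.mul_le_mul (by omega) le_rfl
      _ = 2 ^ 5 ^ c := e1
  have h3 : 2 ^ 5 ^ a + 2 ^ 5 ^ a ≤ 2 ^ 5 ^ (a + 1) := by
    have := ea_lt_ea1 a
    calc 2 ^ 5 ^ a + 2 ^ 5 ^ a = 2 ^ (5 ^ a + 1) := by rw [pow_succ]; ring
      _ ≤ 2 ^ 5 ^ (a + 1) := Nat.pow_le_pow_right (by norm_num) (by omega)
  have h4 : k * 2 ^ 5 ^ (a + 1) + 2 ^ 5 ^ (a + 1) = (k + 1) * 2 ^ 5 ^ (a + 1) := by ring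
  omega

/-- the key modular computation -/
lemma xpt_mod (a c k u D : ℕ) (hu : u < 2 ^ 5 ^ a) (h1 : 5 ^ (a + 1) ≤ D) (h2 : D ≤ 5 ^ c) :
    xpt a c k u % 2 ^ D
      = 2 ^ 5 ^ a + (k % 2 ^ (D - 5 ^ (a + 1))) * 2 ^ 5 ^ (a + 1) + u := by
  set q := k / 2 ^ (D - 5 ^ (a + 1)) with hq
  set r := k % 2 ^ (D - 5 ^ (a + 1)) with hr
  have hpow : 2 ^ (D - 5 ^ (a + 1)) * 2 ^ 5 ^ (a + 1) = 2 ^ D := by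
    rw [← pow_add]; congr 1; omega
  have hkqr : k = q * 2 ^ (D - 5 ^ (a + 1)) + r := by
    rw [hq, hr]; rw [mul_comm]; exact (Nat.div_add_mod k _).symm
  have hrlt : r < 2 ^ (D - 5 ^ (a + 1)) := Nat.mod_lt _ (by positivity)
  have hrem_lt : 2 ^ 5 ^ a + r * 2 ^ 5 ^ (a + 1) + u < 2 ^ D := by
    have h3 : 2 ^ 5 ^ a + 2 ^ 5 ^ a ≤ 2 ^ 5 ^ (a + 1) := by
      have := ea_lt_ea1 a
      calc 2 ^ 5 ^ a + 2 ^ 5 ^ a = 2 ^ (5 ^ a + 1) := by rw [pow_succ]; ring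
        _ ≤ 2 ^ 5 ^ (a + 1) := Nat.pow_le_pow_right (by norm_num) (by omega)
    have h4 : (r + 1) * 2 ^ 5 ^ (a + 1) ≤ 2 ^ D := by
      calc (r + 1) * 2 ^ 5 ^ (a + 1) ≤ 2 ^ (D - 5 ^ (a + 1)) * 2 ^ 5 ^ (a + 1) :=
            Nat.mul_le_mul (by omega) le_rfl
        _ = 2 ^ D := hpow
    have h5 : r * 2 ^ 5 ^ (a + 1) + 2 ^ 5 ^ (a + 1) = (r + 1) * 2 ^ 5 ^ (a + 1) := by ring
    omega
  have hsplit : xpt a c k u =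
      (2 ^ 5 ^ a + r * 2 ^ 5 ^ (a + 1) + u) + (2 ^ (5 ^ c - D) + q) * 2 ^ D := by
    unfold xpt
    have e1 : 2 ^ 5 ^ c = 2 ^ (5 ^ c - D) * 2 ^ D := by rw [← pow_add]; congr 1; omega
    have e2 : k * 2 ^ 5 ^ (a + 1) = q * 2 ^ D + r * 2 ^ 5 ^ (a + 1) := by
      conv_lhs => rw [hkqr]
      rw [add_mul, mul_assoc, hpow]
    rw [e1, e2]
    ring
  rw [hsplit, Nat.add_mul_mod_self_right, Nat.mod_eq_of_lt hrem_lt]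

lemma xpt_in_Bc (a c k u : ℕ) (hac : a + 1 ≤ c) (hu : u < 2 ^ 5 ^ a)
    (hk : k < 2 ^ (5 ^ c - 5 ^ (a + 1))) : xpt a c k u ∈ Bset c := by
  have hlt := xpt_lt a c k u hac hu hk
  have h2 : 2 ^ 5 ^ c + 2 ^ 5 ^ c = 2 ^ (5 ^ c + 1) := by rw [pow_succ]; ring
  have h3 : xpt a c k u < 2 ^ 5 ^ (c + 1) := by
    have : 5 ^ c + 1 ≤ 5 ^ (c + 1) := ea_lt_ea1 c
    calc xpt a c k u < 2 ^ (5 ^ c + 1) := by omega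
      _ ≤ 2 ^ 5 ^ (c + 1) := Nat.pow_le_pow_right (by norm_num) this
  have hmod : xpt a c k u % 2 ^ 5 ^ (c + 1) = xpt a c k u := Nat.mod_eq_of_lt h3
  constructor
  · rw [hmod]; unfold xpt; omega
  · rw [hmod]; omega

lemma xpt_in_Ba (a c k u : ℕ) (hac : a + 1 ≤ c) (hu : u < 2 ^ 5 ^ a) :
    xpt a c k u ∈ Bset a := by
  have hle : 5 ^ (a + 1) ≤ 5 ^ c := Nat.pow_le_pow_right (by norm_num) hac
  have hmod := xpt_mod a c k u (5 ^ (a + 1)) hu le_rfl hle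
  simp only [Nat.sub_self, pow_zero, Nat.mod_one, Nat.zero_mul, add_zero] at hmod
  constructor
  · rw [hmod]; omega
  · rw [hmod]
    have := ea_lt_ea1 a
    have h4 : 2 ^ (5 ^ a + 1) = 2 ^ 5 ^ a + 2 ^ 5 ^ a := by rw [pow_succ]; ring
    omega

lemma xpt_notin_high (a c k u j : ℕ) (hac : a + 1 ≤ c) (hu : u < 2 ^ 5 ^ a)
    (hk : k < 2 ^ (5 ^ c - 5 ^ (a + 1))) (hj : c < j) : xpt a c k u ∉ Bset j := by
  intro hmem
  have hlt := xpt_lt a c k u hac hu hk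
  have h2 : 2 ^ 5 ^ c + 2 ^ 5 ^ c = 2 ^ (5 ^ c + 1) := by rw [pow_succ]; ring
  have h5 : 5 ^ c + 1 ≤ 5 ^ j := by
    have := ea_lt_ea1 c
    have : 5 ^ (c + 1) ≤ 5 ^ j := Nat.pow_le_pow_right (by norm_num) hj
    omega
  have h3 : xpt a c k u < 2 ^ 5 ^ j := by
    calc xpt a c k u < 2 ^ (5 ^ c + 1) := by omega
      _ ≤ 2 ^ 5 ^ j := Nat.pow_le_pow_right (by norm_num) h5
  have h6 : xpt a c k u < 2 ^ 5 ^ (j + 1) := by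
    have h7 : 5 ^ j ≤ 5 ^ (j + 1) := Nat.pow_le_pow_right (by norm_num) (by omega)
    calc xpt a c k u < 2 ^ 5 ^ j := h3
      _ ≤ 2 ^ 5 ^ (j + 1) := Nat.pow_le_pow_right (by norm_num) h7
  obtain ⟨hm1, _⟩ := hmem
  rw [Nat.mod_eq_of_lt h6] at hm1
  omega

lemma xpt_notin_mid (a c k u i : ℕ) (hu : u < 2 ^ 5 ^ a)
    (hi1 : a + 1 ≤ i) (hi2 : i < c)
    (hgood : (k % 2 ^ (5 ^ (i + 1) - 5 ^ (a + 1))) * 2 ^ 5 ^ (a + 1) + 2 ^ (5 ^ a + 1)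
        ≤ 2 ^ 5 ^ i ∨
      2 ^ (5 ^ i + 1) ≤ (k % 2 ^ (5 ^ (i + 1) - 5 ^ (a + 1))) * 2 ^ 5 ^ (a + 1)) :
    xpt a c k u ∉ Bset i := by
  intro hmem
  have h1 : 5 ^ (a + 1) ≤ 5 ^ (i + 1) := Nat.pow_le_pow_right (by norm_num) (by omega)
  have h2 : 5 ^ (i + 1) ≤ 5 ^ c := Nat.pow_le_pow_right (by norm_num) (by omega)
  have hmod := xpt_mod a c k u (5 ^ (i + 1)) hu h1 h2
  obtain ⟨hm1, hm2⟩ := hmem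
  rw [hmod] at hm1 hm2
  have h4 : 2 ^ (5 ^ a + 1) = 2 ^ 5 ^ a + 2 ^ 5 ^ a := by rw [pow_succ]; ring
  rcases hgood with h | h
  · omega
  · omega

end Pieces


section Good

/-- goodness of an index `k` at level `i` -/
def goodAt (a i k : ℕ) : Prop :=
  (k % 2 ^ (5 ^ (i + 1) - 5 ^ (a + 1))) * 2 ^ 5 ^ (a + 1) + 2 ^ (5 ^ a + 1) ≤ 2 ^ 5 ^ i ∨
    2 ^ (5 ^ i + 1) ≤ (k % 2 ^ (5 ^ (i + 1) - 5 ^ (a + 1))) * 2 ^ 5 ^ (a + 1)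

lemma xpt_in_Aseq (a c k u n : ℕ) (hac : a + 1 ≤ c) (hu : u < 2 ^ 5 ^ a)
    (hk : k < 2 ^ (5 ^ c - 5 ^ (a + 1)))
    (hgood : ∀ i, a + 1 ≤ i → i < c → goodAt a i k)
    (hn1 : a + 1 ≤ n) (hnc : n ≤ c) : xpt a c k u ∈ Aseq n := by
  refine ⟨c, hnc, xpt_in_Bc a c k u hac hu hk, ?_⟩
  intro j hj hBj
  by_contra hne
  rcases lt_or_gt_of_ne hne with h | h
  · exact xpt_notin_mid a c k u j hu (by omega) h (hgood j (by omega) h) hBj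
  · exact xpt_notin_high a c k u j hac hu hk h hBj

lemma xpt_notin_Am (a c k u m₁ : ℕ) (hac : a + 1 ≤ c) (hu : u < 2 ^ 5 ^ a)
    (hk : k < 2 ^ (5 ^ c - 5 ^ (a + 1))) (hm : m₁ ≤ a) : xpt a c k u ∉ Aseq m₁ := by
  rintro ⟨i, hi, hBi, huniq⟩
  have h1 := huniq a hm (xpt_in_Ba a c k u hac hu)
  have h2 := huniq c (by omega) (xpt_in_Bc a c k u hac hu hk)
  omega

/-- at least half of all `k < N` are good -/
lemma good_count (a c : ℕ) (ha : 1 ≤ a) (hac : a + 2 ≤ c) :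
    2 ^ (5 ^ c - 5 ^ (a + 1)) ≤
      2 * ((Finset.range (2 ^ (5 ^ c - 5 ^ (a + 1)))).filter
        (fun k => ∀ i, a + 1 ≤ i → i < c → goodAt a i k)).card := by
  classical
  set N := 2 ^ (5 ^ c - 5 ^ (a + 1)) with hN
  set p : ℕ → Prop := fun k => ∀ i, a + 1 ≤ i → i < c → goodAt a i k with hp
  have hsplit : ((Finset.range N).filter p).card + ((Finset.range N).filter (fun k => ¬ p k)).card
      = N := by
    rw [Finset.card_filter_add_card_filter_not, Finset.card_range]
  -- the bad set is covered by residue conditions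
  have hbad : ((Finset.range N).filter (fun k => ¬ p k)).card ≤
      ∑ i ∈ Finset.Ico (a + 1) c,
        ((Finset.range N).filter
          (fun k => k % 2 ^ (5 ^ (i + 1) - 5 ^ (a + 1)) < 2 ^ (5 ^ i + 1 - 5 ^ (a + 1)))).card := by
    calc ((Finset.range N).filter (fun k => ¬ p k)).card
        ≤ ((Finset.Ico (a + 1) c).biUnion (fun i => (Finset.range N).filter
            (fun k => k % 2 ^ (5 ^ (i + 1) - 5 ^ (a + 1)) < 2 ^ (5 ^ i + 1 - 5 ^ (a + 1))))).card := by
          apply Finset.card_le_card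
          intro k hk
          simp only [Finset.mem_filter, hp] at hk
          obtain ⟨hk1, hk2⟩ := hk
          push_neg at hk2
          obtain ⟨i, hi1, hi2, hbad⟩ := hk2
          simp only [Finset.mem_biUnion, Finset.mem_filter, Finset.mem_Ico]
          refine ⟨i, ⟨hi1, hi2⟩, hk1, ?_⟩
          unfold goodAt at hbad
          push_neg at hbad
          obtain ⟨hb1, hb2⟩ := hbad
          -- from hb2 : (k % m) * 2^(5^(a+1)) < 2^(5^i + 1)
          have he : 5 ^ (a + 1) ≤ 5 ^ i + 1 := by
            have : 5 ^ (a + 1) ≤ 5 ^ i := Nat.pow_le_pow_right (by norm_num) hi1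
            omega
          have he2 : 2 ^ (5 ^ i + 1) = 2 ^ (5 ^ i + 1 - 5 ^ (a + 1)) * 2 ^ 5 ^ (a + 1) := by
            rw [← pow_add]; congr 1; omega
          rw [he2] at hb2
          exact Nat.lt_of_mul_lt_mul_right hb2
      _ ≤ _ := Finset.card_biUnion_le
  -- bound each residue count
  have hone : ∀ i ∈ Finset.Ico (a + 1) c,
      ((Finset.range N).filter
        (fun k => k % 2 ^ (5 ^ (i + 1) - 5 ^ (a + 1)) < 2 ^ (5 ^ i + 1 - 5 ^ (a + 1)))).card ≤
      2 ^ (5 ^ c - 5 ^ (i + 1) + (5 ^ i + 1 - 5 ^ (a + 1))) +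
        2 ^ (5 ^ i + 1 - 5 ^ (a + 1) + 1) := by
    intro i hi
    simp only [Finset.mem_Ico] at hi
    set m := 2 ^ (5 ^ (i + 1) - 5 ^ (a + 1)) with hm
    set h := 2 ^ (5 ^ i + 1 - 5 ^ (a + 1)) with hh
    have hcm := cnt_mod m 0 h 0 N (by positivity)
    have heq : ((Finset.range N).filter (fun k => k % m < h)) =
        ((Finset.Ico 0 (0 + N)).filter (fun x => 0 ≤ x % m ∧ x % m < 0 + h)) := by
      ext x
      simp [Finset.mem_Ico]
    rw [heq]
    refine le_trans hcm ?_
    -- (N/m + 2) * h ≤ 2^(5^c - 5^(i+1) + (5^i+1-5^(a+1))) + 2^(5^i+1-5^(a+1)+1)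
    have hle1 : 5 ^ (i + 1) ≤ 5 ^ c := Nat.pow_le_pow_right (by norm_num) (by omega)
    have hle2 : 5 ^ (a + 1) ≤ 5 ^ (i + 1) := Nat.pow_le_pow_right (by norm_num) (by omega)
    have hdiv : N / m = 2 ^ (5 ^ c - 5 ^ (i + 1)) := by
      rw [hN, hm, Nat.pow_div (by omega) (by norm_num)]
      congr 1
      omega
    rw [hdiv, add_mul, ← pow_add, hh]
    have : 2 * 2 ^ (5 ^ i + 1 - 5 ^ (a + 1)) = 2 ^ (5 ^ i + 1 - 5 ^ (a + 1) + 1) := by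
      rw [pow_succ]; ring
    omega
  -- sum the bounds
  have hsum1 : (∑ i ∈ Finset.Ico (a + 1) c,
      2 ^ (5 ^ c - 5 ^ (i + 1) + (5 ^ i + 1 - 5 ^ (a + 1)))) ≤
      2 ^ (5 ^ c - 5 ^ (a + 2) + (5 ^ (a + 1) + 1 - 5 ^ (a + 1)) + 1) := by
    apply sum_pow_dec'
    intro i h1' h2'
    have hQ : 5 ^ (a + 1) ≤ 5 ^ i := Nat.pow_le_pow_right (by norm_num) h1'
    have hQ1 : 1 ≤ 5 ^ (a + 1) := Nat.one_le_pow _ _ (by norm_num)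
    have e1 : 5 ^ (i + 1) = 5 * 5 ^ i := by rw [pow_succ]; ring
    have e2 : 5 ^ (i + 2) = 25 * 5 ^ i := by rw [pow_succ, pow_succ]; ring
    have e3 : 5 ^ (i + 2) ≤ 5 ^ c := Nat.pow_le_pow_right (by norm_num) (by omega)
    omega
  have hsum2 : (∑ i ∈ Finset.Ico (a + 1) c, 2 ^ (5 ^ i + 1 - 5 ^ (a + 1) + 1)) ≤
      2 ^ (5 ^ (c - 1) + 1 - 5 ^ (a + 1) + 1 + 1) := by
    have := sum_pow_inc' (fun i => 5 ^ i + 1 - 5 ^ (a + 1) + 1) (a + 1) c (by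
      intro i h1' h2'
      show 5 ^ i + 1 - 5 ^ (a + 1) + 1 + 1 ≤ 5 ^ (i + 1) + 1 - 5 ^ (a + 1) + 1
      have hQ : 5 ^ (a + 1) ≤ 5 ^ i := Nat.pow_le_pow_right (by norm_num) h1'
      have hQ1 : 1 ≤ 5 ^ (a + 1) := Nat.one_le_pow _ _ (by norm_num)
      have e1 : 5 ^ (i + 1) = 5 * 5 ^ i := by rw [pow_succ]; ring
      omega)
    simpa using this
  -- numeric comparisons
  have hc3 : 3 ≤ c := by omega
  have hNbig1 : 8 * 2 ^ (5 ^ c - 5 ^ (a + 2) + (5 ^ (a + 1) + 1 - 5 ^ (a + 1)) + 1) ≤ N := by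
    rw [show (8:ℕ) = 2 ^ 3 by norm_num, ← pow_add, hN]
    apply Nat.pow_le_pow_right (by norm_num)
    have e1 : 5 ^ (a + 2) = 5 * 5 ^ (a + 1) := by rw [pow_succ]; ring
    have e2 : 5 ^ (a + 2) ≤ 5 ^ c := Nat.pow_le_pow_right (by norm_num) (by omega)
    have e3 : 25 ≤ 5 ^ (a + 1) := by
      calc (25:ℕ) = 5 ^ 2 := by norm_num
        _ ≤ 5 ^ (a + 1) := Nat.pow_le_pow_right (by norm_num) (by omega)
    omega
  have hNbig2 : 8 * 2 ^ (5 ^ (c - 1) + 1 - 5 ^ (a + 1) + 1 + 1) ≤ N := by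
    rw [show (8:ℕ) = 2 ^ 3 by norm_num, ← pow_add, hN]
    apply Nat.pow_le_pow_right (by norm_num)
    have e1 : 5 ^ c = 5 * 5 ^ (c - 1) := by
      rw [show c = (c - 1) + 1 by omega, pow_succ]
      rw [show (c - 1) + 1 - 1 = c - 1 by omega]
      ring
    have e2 : 5 ^ (a + 1) ≤ 5 ^ (c - 1) := Nat.pow_le_pow_right (by norm_num) (by omega)
    have e3 : 25 ≤ 5 ^ (c - 1) := by
      calc (25:ℕ) = 5 ^ 2 := by norm_num
        _ ≤ 5 ^ (c - 1) := Nat.pow_le_pow_right (by norm_num) (by omega)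
    omega
  have hbadsum : ((Finset.range N).filter (fun k => ¬ p k)).card ≤ N / 4 := by
    have h1 : ((Finset.range N).filter (fun k => ¬ p k)).card ≤
        2 ^ (5 ^ c - 5 ^ (a + 2) + (5 ^ (a + 1) + 1 - 5 ^ (a + 1)) + 1) +
        2 ^ (5 ^ (c - 1) + 1 - 5 ^ (a + 1) + 1 + 1) := by
      refine le_trans hbad (le_trans (Finset.sum_le_sum hone) ?_)
      rw [Finset.sum_add_distrib]
      omega
    omega
  have hfin : N ≤ 2 * ((Finset.range N).filter p).card := by omega
  exact hfin

end Good


/-- start of the `k`-th piece -/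
def startp (a c k : ℕ) : ℕ := 2 ^ 5 ^ c + 2 ^ 5 ^ a + k * 2 ^ 5 ^ (a + 1)

lemma startp_add (a c k u : ℕ) : startp a c k + u = xpt a c k u := rfl

/-- summing piece counts against the big window -/
lemma sum_pieces (S : Set ℕ) (a c : ℕ) (hac : a + 1 ≤ c) (G : Finset ℕ)
    (hG : G ⊆ Finset.range (2 ^ (5 ^ c - 5 ^ (a + 1)))) :
    (∑ k ∈ G, cnt S (startp a c k) (2 ^ 5 ^ a)) ≤ cnt S (2 ^ 5 ^ c) (2 ^ 5 ^ c) := by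
  classical
  have hdisj : ∀ k ∈ G, ∀ k' ∈ G, k ≠ k' →
      Disjoint ((Finset.Ico (startp a c k) (startp a c k + 2 ^ 5 ^ a)).filter (fun x => x ∈ S))
        ((Finset.Ico (startp a c k') (startp a c k' + 2 ^ 5 ^ a)).filter (fun x => x ∈ S)) := by
    intro k _ k' _ hne
    apply Finset.disjoint_filter_filter
    rw [Finset.disjoint_left]
    intro x hx hx'
    simp only [Finset.mem_Ico, startp] at hx hx'
    have hea : 2 ^ 5 ^ a ≤ 2 ^ 5 ^ (a + 1) :=
      Nat.pow_le_pow_right (by norm_num) (Nat.pow_le_pow_right (by norm_num) (by omega))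
    rcases lt_or_gt_of_ne hne with h | h
    · have h1 : (k + 1) * 2 ^ 5 ^ (a + 1) ≤ k' * 2 ^ 5 ^ (a + 1) := Nat.mul_le_mul (by omega) le_rfl
      have h2 : k * 2 ^ 5 ^ (a + 1) + 2 ^ 5 ^ (a + 1) = (k + 1) * 2 ^ 5 ^ (a + 1) := by ring
      omega
    · have h1 : (k' + 1) * 2 ^ 5 ^ (a + 1) ≤ k * 2 ^ 5 ^ (a + 1) := Nat.mul_le_mul (by omega) le_rfl
      have h2 : k' * 2 ^ 5 ^ (a + 1) + 2 ^ 5 ^ (a + 1) = (k' + 1) * 2 ^ 5 ^ (a + 1) := by ring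
      omega
  calc (∑ k ∈ G, cnt S (startp a c k) (2 ^ 5 ^ a))
      = (G.biUnion (fun k =>
          (Finset.Ico (startp a c k) (startp a c k + 2 ^ 5 ^ a)).filter (fun x => x ∈ S))).card := by
        rw [Finset.card_biUnion hdisj]
        rfl
    _ ≤ cnt S (2 ^ 5 ^ c) (2 ^ 5 ^ c) := by
        apply Finset.card_le_card
        intro x hx
        simp only [Finset.mem_biUnion, Finset.mem_filter, Finset.mem_Ico] at hx
        obtain ⟨k, hkG, ⟨hx1, hx2⟩, hxS⟩ := hx
        have hkN := hG hkG
        simp only [Finset.mem_range] at hkN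
        simp only [cnt, Finset.mem_filter, Finset.mem_Ico]
        have hb1 : 2 ^ 5 ^ c ≤ x := by
          have : 2 ^ 5 ^ c ≤ startp a c k := by unfold startp; omega
          omega
        have hxe : x = xpt a c k (x - startp a c k) := by
          rw [← startp_add]
          omega
        have hult : x - startp a c k < 2 ^ 5 ^ a := by
          unfold startp at hx1 hx2 ⊢
          omega
        have hlt := xpt_lt a c k (x - startp a c k) hac hult hkN
        rw [← hxe] at hlt
        exact ⟨⟨hb1, hlt⟩, hxS⟩

/-- the per-piece lower bound for the discrepancy set -/
lemma piece_lower (L : Set ℕ) (a c k n m₁ M₁ : ℕ)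
    (hac : a + 1 ≤ c) (hm : m₁ ≤ a) (hna : a + 1 ≤ n) (hnc : n ≤ c)
    (hk : k < 2 ^ (5 ^ c - 5 ^ (a + 1)))
    (hgood : ∀ i, a + 1 ≤ i → i < c → goodAt a i k)
    (hM₁pos : 0 < M₁) (haM₁ : M₁ ≤ 2 ^ 5 ^ a)
    (hM₁ : ∀ j, (cnt (symmDiff (Aseq m₁) L) j M₁ : ℝ) ≤ (1/8) * M₁) :
    ((3:ℝ)/4) * 2 ^ 5 ^ a ≤ (cnt (symmDiff (Aseq n) L) (startp a c k) (2 ^ 5 ^ a) : ℝ) := by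
  classical
  set s := startp a c k with hs
  set ℓ : ℕ := 2 ^ 5 ^ a with hℓ
  have hmem : ∀ x ∈ Finset.Ico s (s + ℓ), x ∈ Aseq n ∧ x ∉ Aseq m₁ := by
    intro x hx
    simp only [Finset.mem_Ico] at hx
    have hxe : x = xpt a c k (x - s) := by
      rw [hs, ← startp_add]
      omega
    have hult : x - s < 2 ^ 5 ^ a := by
      rw [hs] at hx
      omega
    rw [hxe]
    exact ⟨xpt_in_Aseq a c k _ n hac hult hk hgood hna hnc,
      xpt_notin_Am a c k _ m₁ hac hult hk hm⟩
  -- L is small on the piece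
  have hLsub : cnt L s ℓ ≤ cnt (symmDiff (Aseq m₁) L) s ℓ := by
    apply Finset.card_le_card
    intro x hx
    simp only [Finset.mem_filter] at hx ⊢
    refine ⟨hx.1, ?_⟩
    rw [Set.mem_symmDiff]
    right
    exact ⟨hx.2, (hmem x hx.1).2⟩
  have hLsmall : (cnt L s ℓ : ℝ) ≤ (1/4) * ℓ := by
    have htile := cnt_tile (symmDiff (Aseq m₁) L) M₁ (1/8) hM₁pos (by norm_num) hM₁ s ℓ
    have hM₁ℓ : (M₁ : ℝ) ≤ (ℓ : ℝ) := by exact_mod_cast haM₁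
    have hcast : (cnt L s ℓ : ℝ) ≤ (cnt (symmDiff (Aseq m₁) L) s ℓ : ℝ) := by
      exact_mod_cast hLsub
    calc (cnt L s ℓ : ℝ) ≤ (cnt (symmDiff (Aseq m₁) L) s ℓ : ℝ) := hcast
      _ ≤ (1/8) * ℓ + (1/8) * M₁ := htile
      _ ≤ (1/4) * ℓ := by linarith
  -- the piece minus L is inside the discrepancy set
  have hnotL : ((Finset.Ico s (s + ℓ)).filter (fun x => ¬ x ∈ L)).card ≤
      cnt (symmDiff (Aseq n) L) s ℓ := by
    apply Finset.card_le_card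
    intro x hx
    simp only [Finset.mem_filter] at hx ⊢
    refine ⟨hx.1, ?_⟩
    rw [Set.mem_symmDiff]
    left
    exact ⟨(hmem x hx.1).1, hx.2⟩
  have hpart : cnt L s ℓ + ((Finset.Ico s (s + ℓ)).filter (fun x => ¬ x ∈ L)).card = ℓ := by
    have := Finset.card_filter_add_card_filter_not
      (s := Finset.Ico s (s + ℓ)) (p := fun x => x ∈ L)
    rw [Nat.card_Ico] at this
    simpa [cnt] using this
  have hsplit : ℓ ≤ cnt (symmDiff (Aseq n) L) s ℓ + cnt L s ℓ := by omega
  have hcast2 : ((ℓ : ℕ) : ℝ) ≤ (cnt (symmDiff (Aseq n) L) s ℓ : ℝ) + (cnt L s ℓ : ℝ) := by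
    exact_mod_cast hsplit
  have hcastℓ : ((ℓ : ℕ) : ℝ) = (2:ℝ) ^ 5 ^ a := by rw [hℓ]; push_cast; ring
  rw [← hcastℓ]
  linarith


set_option maxHeartbeats 1000000 in
/-- the sequence does not converge to any `L` -/
lemma no_limit (L : Set ℕ) :
    ¬ Filter.Tendsto (fun n => min 1 (upperBanachDensity (symmDiff (Aseq n) L)))
      Filter.atTop (nhds 0) := by
  classical
  intro hT
  have hget : ∀ ε : ℝ, 0 < ε → ε ≤ 1 →
      ∃ n₀ : ℕ, ∀ n, n₀ ≤ n → upperBanachDensity (symmDiff (Aseq n) L) < ε := by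
    intro ε hε hε1
    have hmem := hT (Iio_mem_nhds hε)
    rw [Filter.mem_map, Filter.mem_atTop_sets] at hmem
    obtain ⟨n₀, hn₀⟩ := hmem
    refine ⟨n₀, fun n hn => ?_⟩
    have hx := hn₀ n hn
    simp only [Set.mem_preimage, Set.mem_Iio] at hx
    by_contra hcon
    push_neg at hcon
    have : ε ≤ min 1 (upperBanachDensity (symmDiff (Aseq n) L)) := le_min hε1 hcon
    linarith
  -- step 1 : level 1/8
  obtain ⟨m₁, hm₁⟩ := hget (1/8) (by norm_num) (by norm_num)
  obtain ⟨M₁, hM₁pos, hM₁⟩ := ubd_lt _ _ (hm₁ m₁ le_rfl)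
  -- step 2 : choose a
  set a := m₁ + M₁ + 1 with ha
  have haM₁ : M₁ ≤ 2 ^ 5 ^ a := by
    have h1 : a < 5 ^ a := Nat.lt_pow_self (n := a) (by norm_num)
    have h2 : 5 ^ a < 2 ^ 5 ^ a := Nat.lt_two_pow_self
    omega
  -- step 3 : level ρ
  set ρ : ℝ := 1 / 2 ^ (4 * 5 ^ a + 5) with hρ
  have hρpos : 0 < ρ := by rw [hρ]; positivity
  obtain ⟨n₀, hn₀⟩ := hget ρ hρpos (by
    rw [hρ, div_le_one (by positivity)]
    exact one_le_pow₀ (by norm_num))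
  set n := max n₀ (a + 1) with hn
  have hna : a + 1 ≤ n := le_max_right _ _
  obtain ⟨M₂, hM₂pos, hM₂⟩ := ubd_lt _ _ (hn₀ n (le_max_left _ _))
  -- step 4 : choose c
  set c := n + M₂ + a + 2 with hc
  have hcn : n ≤ c := by omega
  have hca : a + 2 ≤ c := by omega
  have hM₂c : M₂ ≤ 2 ^ 5 ^ c := by
    have h1 : c < 5 ^ c := Nat.lt_pow_self (n := c) (by norm_num)
    have h2 : 5 ^ c < 2 ^ 5 ^ c := Nat.lt_two_pow_self
    omega
  set N := 2 ^ (5 ^ c - 5 ^ (a + 1)) with hN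
  set G := (Finset.range N).filter (fun k => ∀ i, a + 1 ≤ i → i < c → goodAt a i k) with hG
  have hGN : G ⊆ Finset.range N := Finset.filter_subset _ _
  have hGcard : N ≤ 2 * G.card := good_count a c (by omega) hca
  -- per-piece lower bounds
  have hpiece : ∀ k ∈ G, ((3:ℝ)/4) * 2 ^ 5 ^ a ≤
      (cnt (symmDiff (Aseq n) L) (startp a c k) (2 ^ 5 ^ a) : ℝ) := by
    intro k hkG
    simp only [hG, Finset.mem_filter, Finset.mem_range] at hkG
    exact piece_lower L a c k n m₁ M₁ (by omega) (by omega) hna hcn hkG.1 hkG.2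
      hM₁pos haM₁ (fun j => le_of_lt (hM₁ j))
  -- aggregate
  have hagg : (∑ k ∈ G, cnt (symmDiff (Aseq n) L) (startp a c k) (2 ^ 5 ^ a)) ≤
      cnt (symmDiff (Aseq n) L) (2 ^ 5 ^ c) (2 ^ 5 ^ c) :=
    sum_pieces _ a c (by omega) G hGN
  have hupper : (cnt (symmDiff (Aseq n) L) (2 ^ 5 ^ c) (2 ^ 5 ^ c) : ℝ) ≤
      ρ * (2 ^ 5 ^ c : ℕ) + ρ * M₂ :=
    cnt_tile _ M₂ ρ hM₂pos (le_of_lt hρpos) (fun j => le_of_lt (hM₂ j)) _ _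
  -- combine
  have hlow : ((N : ℝ) / 2) * ((3/4) * 2 ^ 5 ^ a) ≤
      (cnt (symmDiff (Aseq n) L) (2 ^ 5 ^ c) (2 ^ 5 ^ c) : ℝ) := by
    have h1 : ((N : ℝ) / 2) ≤ (G.card : ℝ) := by
      have h2 : (N : ℝ) ≤ 2 * G.card := by exact_mod_cast hGcard
      linarith
    have h2 : (G.card : ℝ) * ((3/4) * 2 ^ 5 ^ a) ≤
        ∑ k ∈ G, (cnt (symmDiff (Aseq n) L) (startp a c k) (2 ^ 5 ^ a) : ℝ) := by
      calc (G.card : ℝ) * ((3/4) * 2 ^ 5 ^ a) = ∑ _k ∈ G, ((3:ℝ)/4) * 2 ^ 5 ^ a := by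
            rw [Finset.sum_const, nsmul_eq_mul]
        _ ≤ _ := Finset.sum_le_sum hpiece
    have h3 : (∑ k ∈ G, (cnt (symmDiff (Aseq n) L) (startp a c k) (2 ^ 5 ^ a) : ℝ)) ≤
        (cnt (symmDiff (Aseq n) L) (2 ^ 5 ^ c) (2 ^ 5 ^ c) : ℝ) := by
      rw [← Nat.cast_sum]
      exact_mod_cast hagg
    have h4 : (0:ℝ) ≤ (3/4) * 2 ^ 5 ^ a := by positivity
    nlinarith
  -- numeric contradiction
  have hkey1 : (N : ℝ) * 2 ^ 5 ^ (a + 1) = ((2 ^ 5 ^ c : ℕ) : ℝ) := by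
    have hnat : N * 2 ^ 5 ^ (a + 1) = 2 ^ 5 ^ c := by
      rw [hN, ← pow_add]
      congr 1
      have : 5 ^ (a + 1) ≤ 5 ^ c := Nat.pow_le_pow_right (by norm_num) (by omega)
      omega
    exact_mod_cast hnat
  have hkey2 : (2:ℝ) ^ 5 ^ (a + 1) = 2 ^ 5 ^ a * 2 ^ (4 * 5 ^ a) := by
    rw [← pow_add]
    congr 1
    have : 5 ^ (a + 1) = 5 * 5 ^ a := by rw [pow_succ]; ring
    omega
  have hkey3 : ρ * ((2 ^ 5 ^ c : ℕ) : ℝ) = (N : ℝ) * 2 ^ 5 ^ a / 32 := by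
    rw [hρ, ← hkey1, hkey2, pow_add]
    have h32 : (2:ℝ) ^ 5 = 32 := by norm_num
    rw [h32]
    have hpos1 : (0:ℝ) < 2 ^ (4 * 5 ^ a) := by positivity
    field_simp
  have hM₂ρ : ρ * M₂ ≤ ρ * ((2 ^ 5 ^ c : ℕ) : ℝ) := by
    have h1 : (M₂:ℝ) ≤ ((2 ^ 5 ^ c : ℕ) : ℝ) := by exact_mod_cast hM₂c
    nlinarith
  have hY : (1:ℝ) ≤ (N : ℝ) * 2 ^ 5 ^ a := by
    have hN1 : 1 ≤ N := Nat.one_le_pow _ _ (by norm_num)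
    have h1 : (1:ℝ) ≤ (N:ℝ) := by exact_mod_cast hN1
    have h2 : (1:ℝ) ≤ (2:ℝ) ^ 5 ^ a := one_le_pow₀ (by norm_num)
    nlinarith
  have hfinal : ((N : ℝ) / 2) * ((3/4) * 2 ^ 5 ^ a) ≤ 2 * ((N : ℝ) * 2 ^ 5 ^ a / 32) := by
    calc ((N : ℝ) / 2) * ((3/4) * 2 ^ 5 ^ a)
        ≤ ρ * ((2 ^ 5 ^ c : ℕ) : ℝ) + ρ * M₂ := le_trans hlow hupper
      _ ≤ 2 * (ρ * ((2 ^ 5 ^ c : ℕ) : ℝ)) := by linarith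
      _ = 2 * ((N : ℝ) * 2 ^ 5 ^ a / 32) := by rw [hkey3]
  nlinarith

end BanachAux

/-- The pseudometric space `(𝒫(ℕ), d_{bd*})` is not complete: there is a
`d_{bd*}`-Cauchy sequence of subsets of `ℕ` that does not `d_{bd*}`-converge. -/
theorem not_complete_upperBanachDensity :
    ∃ A : ℕ → Set ℕ,
      (∀ ε : ℝ, 0 < ε → ∃ N : ℕ, ∀ m ≥ N, ∀ n ≥ N,
        min 1 (upperBanachDensity (symmDiff (A m) (A n))) < ε) ∧
      ∀ L : Set ℕ,
        ¬ Tendsto (fun n => min 1 (upperBanachDensity (symmDiff (A n) L)))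
          atTop (nhds 0) := by
  classical
  refine ⟨BanachAux.Aseq, ?_, fun L => BanachAux.no_limit L⟩
  intro ε hε
  obtain ⟨N₀, hN₀⟩ : ∃ N₀ : ℕ, (3:ℝ) / 2 ^ N₀ < ε := by
    obtain ⟨N₀, hN₀⟩ := pow_unbounded_of_one_lt (3 / ε) (by norm_num : (1:ℝ) < 2)
    refine ⟨N₀, ?_⟩
    rw [div_lt_iff₀ (by positivity)]
    rw [div_lt_iff₀ hε] at hN₀
    linarith [hN₀]
  refine ⟨N₀, fun m hm n hn => ?_⟩
  have key : ∀ p q : ℕ, N₀ ≤ p → p ≤ q →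
      min 1 (upperBanachDensity (symmDiff (BanachAux.Aseq p) (BanachAux.Aseq q))) < ε := by
    intro p q hp hpq
    have h1 := BanachAux.cauchy_bound p q hpq
    have h2 : (3:ℝ) / 2 ^ (4 * 5 ^ p) ≤ 3 / 2 ^ N₀ := by
      apply div_le_div_of_nonneg_left (by norm_num) (by positivity)
      apply pow_le_pow_right₀ (by norm_num)
      have := Nat.lt_pow_self (n := p) (by norm_num : 1 < 5)
      omega
    calc min 1 (upperBanachDensity (symmDiff (BanachAux.Aseq p) (BanachAux.Aseq q)))
        ≤ upperBanachDensity (symmDiff (BanachAux.Aseq p) (BanachAux.Aseq q)) := min_le_right _ _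
      _ ≤ 3 / 2 ^ (4 * 5 ^ p) := h1
      _ ≤ 3 / 2 ^ N₀ := h2
      _ < ε := hN₀
  rcases le_total m n with h | h
  · exact key m n hm h
  · rw [symmDiff_comm]
    exact key n m hn h
end
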